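/- arXiv:1909.10589 — 6 statements merged into one kernel-verified Lean document; each statement's English description precedes it below -/
import Mathlib

section
/- Let A, B ∈ M₂(ℂ), where A has distinct eigenvalues λ₁ ≠ λ₂ and B has distinct eigenvalues μ₁ ≠ μ₂. If (μ₁ − μ₂)/(λ₁ − λ₂) is a positive real number, then the pairing λ_j ↦ μ_j is a convex eigenpairing of A and B: there exists an eigenpath set {γ₁, γ₂} of the convex path α ↦ (1−α)A + αB with γ_j(0) = λ_j and γ_j(1) = μ_j for j = 1, 2. -/
/-! The eigenvalues of `(1 - α) A + α B` are `(tr ± D) / 2` with `D² = tr² - 4 det`, a quadratic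
in `α` taking the values `(λ₁ - λ₂)²` at `0` and `(μ₁ - μ₂)² = r² (λ₁ - λ₂)²` at `1`. Divided by
`(λ₁ - λ₂)²` it factors as `(1 - α + α z₁) (1 - α + α z₂)` with `z₁ z₂ = r²`, so it suffices to find
a continuous square root `u` of this product on `[0, 1]` with `u 0 = 1` and `u 1 = r`. Take the
product of the principal square roots of the two factors. If the `zᵢ` avoid `(-∞, 0]`, both values
at `1` have positive real part, so their product, a square root of `r²`, cannot be `-r`. Otherwise
both `zᵢ` are negative reals, and conjugating the second factor gives the same conclusion. -/

open Polynomial Set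

def IsEigenpathSet (n : ℕ) (C : ℝ → Matrix (Fin n) (Fin n) ℂ) (γ : Fin n → ℝ → ℂ) : Prop :=
  (∀ j, ContinuousOn (γ j) (Set.Icc 0 1)) ∧
  ∀ α ∈ Set.Icc (0 : ℝ) 1,
    (Finset.univ.val.map fun j => γ j α) = (Matrix.charpoly (C α)).roots

open Complex ComplexConjugate

namespace Complex

lemma re_cpow_inv_two_pos {z : ℂ} (hz : z ∈ slitPlane) : 0 < (z ^ (2⁻¹ : ℂ)).re := by
  rw [cpow_inv_two_re, Real.sqrt_pos]
  rcases mem_slitPlane_iff.mp hz with hre | him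
  · linarith [norm_nonneg z]
  · linarith [abs_re_lt_norm.mpr him, neg_abs_le z.re]

lemma im_cpow_inv_two_pos {z : ℂ} (hz : z ∉ slitPlane) (h0 : z ≠ 0) :
    0 < (z ^ (2⁻¹ : ℂ)).im := by
  obtain ⟨hre, him⟩ : z.re ≤ 0 ∧ z.im = 0 := by simpa [mem_slitPlane_iff] using hz
  have hre' : z.re ≠ 0 := fun h => h0 (ext h him)
  rw [cpow_inv_two_im_eq_sqrt him.ge, Real.sqrt_pos]
  linarith [norm_nonneg z, lt_of_le_of_ne hre hre']

lemma notMem_slitPlane_of_mul_eq_sq {z w : ℂ} {r : ℝ} (hr : r ≠ 0) (h : z * w = (r : ℂ) ^ 2)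
    (hw : w ∉ slitPlane) : z ∉ slitPlane := by
  simp only [mem_slitPlane_iff, not_or, not_lt, not_not] at hw ⊢
  have hre : z.re * w.re = r ^ 2 := by simpa [hw.2, ← ofReal_pow] using congrArg re h
  have him : z.im * w.re = 0 := by simpa [hw.2, ← ofReal_pow] using congrArg im h
  have hw0 : w.re ≠ 0 := fun h0 => by simp [h0] at hre; exact pow_ne_zero 2 hr hre.symm
  exact ⟨by nlinarith [lt_of_le_of_ne hw.1 hw0, sq_pos_of_ne_zero hr],
    (mul_eq_zero.mp him).resolve_right hw0⟩

lemma mul_ne_neg_ofReal_of_re_pos {a b : ℂ} {r : ℝ} (hr : 0 ≤ r) (ha : 0 < a.re)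
    (hb : 0 < b.re) : a * b ≠ -r := by
  intro h
  have hre : a.re * b.re - a.im * b.im = -r := by simpa using congrArg re h
  have him : a.re * b.im + a.im * b.re = 0 := by simpa using congrArg im h
  have : (a.re ^ 2 + a.im ^ 2) * b.re = -r * a.re := by
    linear_combination a.re * hre + a.im * him
  nlinarith [mul_pos (mul_pos ha ha) hb]

end Complex

noncomputable def segmentSqrt (z : ℂ) (α : ℝ) : ℂ := (1 - α + α * z) ^ (2⁻¹ : ℂ)

lemma segmentSqrt_sq (z : ℂ) (α : ℝ) : segmentSqrt z α ^ 2 = 1 - α + α * z :=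
  cpow_ofNat_inv_pow _ 2

@[simp]
lemma segmentSqrt_zero (z : ℂ) : segmentSqrt z 0 = 1 := by simp [segmentSqrt]

@[simp]
lemma segmentSqrt_one (z : ℂ) : segmentSqrt z 1 = z ^ (2⁻¹ : ℂ) := by simp [segmentSqrt]

lemma continuousOn_segmentSqrt (z : ℂ) : ContinuousOn (segmentSqrt z) (Icc 0 1) := by
  by_cases hz : z ∈ slitPlane
  · refine ContinuousOn.cpow_const (by fun_prop) fun α hα => ?_
    simpa [real_smul] using starConvex_one_slitPlane hz (sub_nonneg.mpr hα.2) hα.1 (by ring)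
  · -- the segment lies on the real axis, where `x ↦ x ^ (1/2)` is continuous across the cut
    have hz : ((z.re : ℝ) : ℂ) = z := by
      rw [← conj_eq_iff_re, conj_eq_iff_im]
      exact (by simpa [mem_slitPlane_iff] using hz : z.re ≤ 0 ∧ z.im = 0).2
    have : segmentSqrt z = fun α : ℝ => ((1 - α + α * z.re : ℝ) : ℂ) ^ (2⁻¹ : ℂ) := by
      ext α; simp [segmentSqrt, hz]
    rw [this]
    exact ((continuous_ofReal_cpow_const (by norm_num)).comp (by fun_prop)).continuousOn

theorem exists_sqrt_path_of_mul_eq_sq {z₁ z₂ : ℂ} {r : ℝ} (hr : 0 < r)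
    (h : z₁ * z₂ = (r : ℂ) ^ 2) :
    ∃ u : ℝ → ℂ, ContinuousOn u (Icc 0 1) ∧
      (∀ α : ℝ, u α ^ 2 = (1 - α + α * z₁) * (1 - α + α * z₂)) ∧ u 0 = 1 ∧ u 1 = r := by
  suffices ∃ u : ℝ → ℂ, ContinuousOn u (Icc 0 1) ∧
      (∀ α : ℝ, u α ^ 2 = (1 - α + α * z₁) * (1 - α + α * z₂)) ∧ u 0 = 1 ∧ u 1 ≠ -r by
    obtain ⟨u, hu, hu2, hu0, hu1⟩ := this
    refine ⟨u, hu, hu2, hu0, (sq_eq_sq_iff_eq_or_eq_neg.mp ?_).resolve_right hu1⟩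
    simpa [hu2] using h
  by_cases hz₁ : z₁ ∈ slitPlane
  · have hz₂ : z₂ ∈ slitPlane :=
      not_imp_not.mp (notMem_slitPlane_of_mul_eq_sq hr.ne' h) hz₁
    refine ⟨fun α => segmentSqrt z₁ α * segmentSqrt z₂ α,
      (continuousOn_segmentSqrt z₁).mul (continuousOn_segmentSqrt z₂),
      fun α => by rw [mul_pow, segmentSqrt_sq, segmentSqrt_sq], by simp, ?_⟩
    simpa using mul_ne_neg_ofReal_of_re_pos hr.le (re_cpow_inv_two_pos hz₁)
      (re_cpow_inv_two_pos hz₂)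
  · have hz₂ : z₂ ∉ slitPlane := notMem_slitPlane_of_mul_eq_sq hr.ne' (by rwa [mul_comm]) hz₁
    have hz₂_real : conj z₂ = z₂ := conj_eq_iff_im.mpr
      (by simpa [mem_slitPlane_iff] using hz₂ : z₂.re ≤ 0 ∧ z₂.im = 0).2
    obtain ⟨hz₁0, hz₂0⟩ : z₁ ≠ 0 ∧ z₂ ≠ 0 := mul_ne_zero_iff.mp (by rw [h]; simp [hr.ne'])
    refine ⟨fun α => segmentSqrt z₁ α * conj (segmentSqrt z₂ α),
      (continuousOn_segmentSqrt z₁).mul (continuous_conj.comp_continuousOn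
        (continuousOn_segmentSqrt z₂)),
      fun α => by simp [mul_pow, ← map_pow, segmentSqrt_sq, hz₂_real], by simp, fun h1 => ?_⟩
    have := congrArg re h1
    simp only [segmentSqrt_one, mul_re, conj_re, conj_im, neg_re, ofReal_re] at this
    nlinarith [cpow_inv_two_re z₁ ▸ Real.sqrt_nonneg _, cpow_inv_two_re z₂ ▸ Real.sqrt_nonneg _,
      im_cpow_inv_two_pos hz₁ hz₁0, im_cpow_inv_two_pos hz₂ hz₂0]

lemma Matrix.charpoly_roots_fin_two {R : Type*} [CommRing R] [IsDomain R]
    {M : Matrix (Fin 2) (Fin 2) R} {x y : R} (hs : x + y = M.trace) (hp : x * y = M.det) :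
    M.charpoly.roots = {x, y} := by
  have : M.charpoly = (X - C x) * (X - C y) := by
    rw [charpoly_fin_two, ← hs, ← hp, map_add, map_mul]; ring
  rw [this, roots_mul (mul_ne_zero (X_sub_C_ne_zero x) (X_sub_C_ne_zero y)), roots_X_sub_C,
    roots_X_sub_C]
  rfl

lemma Matrix.exists_trace_sq_sub_four_mul_det_convex {R : Type*} [CommRing R]
    (A B : Matrix (Fin 2) (Fin 2) R) : ∃ k : R, ∀ α : R,
      ((1 - α) • A + α • B).trace ^ 2 - 4 * ((1 - α) • A + α • B).det =
        (1 - α) ^ 2 * (A.trace ^ 2 - 4 * A.det) + α * (1 - α) * k +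
          α ^ 2 * (B.trace ^ 2 - 4 * B.det) :=
  ⟨2 * A.trace * B.trace - 4 * (A 0 0 * B 1 1 + B 0 0 * A 1 1 - A 0 1 * B 1 0 - B 0 1 * A 1 0),
    fun α => by simp only [trace_fin_two, det_fin_two, add_apply, smul_apply, smul_eq_mul]; ring⟩

lemma exists_add_eq_and_mul_eq {K : Type*} [Field K] [IsAlgClosed K] (s p : K) :
    ∃ x y : K, x + y = s ∧ x * y = p := by
  have hdeg : (X ^ 2 - C s * X + C p : K[X]).degree = 2 := by compute_degree!
  obtain ⟨x, hx⟩ := IsAlgClosed.exists_root _ (by rw [hdeg]; decide)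
  refine ⟨x, s - x, by ring, ?_⟩
  simp only [IsRoot, eval_add, eval_sub, eval_mul, eval_pow, eval_C, eval_X] at hx
  linear_combination -hx

theorem isEigenpathSet_two_of_sq_eq_discr {M : ℝ → Matrix (Fin 2) (Fin 2) ℂ} (hM : Continuous M)
    {D : ℝ → ℂ} (hD : ContinuousOn D (Icc 0 1))
    (hD2 : ∀ α ∈ Icc (0 : ℝ) 1, D α ^ 2 = (M α).trace ^ 2 - 4 * (M α).det) :
    IsEigenpathSet 2 M ![fun α => ((M α).trace + D α) / 2, fun α => ((M α).trace - D α) / 2] := by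
  have htr : ContinuousOn (fun α => (M α).trace) (Icc 0 1) := hM.matrix_trace.continuousOn
  refine ⟨fun j => ?_, fun α hα => ?_⟩
  · fin_cases j
    exacts [(htr.add hD).div_const 2, (htr.sub hD).div_const 2]
  rw [Matrix.charpoly_roots_fin_two (x := ((M α).trace + D α) / 2)
    (y := ((M α).trace - D α) / 2) (by ring) (by linear_combination -(hD2 α hα) / 4)]
  rfl

theorem identity_pairing_of_pos_real_ratio_general
    (A B : Matrix (Fin 2) (Fin 2) ℂ) (lam₁ lam₂ mu₁ mu₂ : ℂ)
    (hA : (Matrix.charpoly A).roots = {lam₁, lam₂}) (hlam : lam₁ ≠ lam₂)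
    (hB : (Matrix.charpoly B).roots = {mu₁, mu₂})
    (hratio : ∃ r : ℝ, 0 < r ∧ (mu₁ - mu₂) / (lam₁ - lam₂) = (r : ℂ)) :
    ∃ γ : Fin 2 → ℝ → ℂ,
      IsEigenpathSet 2 (fun α => ((1 - α : ℝ) : ℂ) • A + (α : ℂ) • B) γ ∧
      γ 0 0 = lam₁ ∧ γ 1 0 = lam₂ ∧ γ 0 1 = mu₁ ∧ γ 1 1 = mu₂ := by
  obtain ⟨r, hr, hrat⟩ := hratio
  have hδ : lam₁ - lam₂ ≠ 0 := sub_ne_zero.mpr hlam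
  have hμ : mu₁ - mu₂ = r * (lam₁ - lam₂) := by rwa [div_eq_iff hδ] at hrat
  have htA : A.trace = lam₁ + lam₂ := by simp [Matrix.trace_eq_sum_roots_charpoly, hA]
  have hdA : A.det = lam₁ * lam₂ := by simp [Matrix.det_eq_prod_roots_charpoly, hA]
  have htB : B.trace = mu₁ + mu₂ := by simp [Matrix.trace_eq_sum_roots_charpoly, hB]
  have hdB : B.det = mu₁ * mu₂ := by simp [Matrix.det_eq_prod_roots_charpoly, hB]
  obtain ⟨k, hk⟩ := Matrix.exists_trace_sq_sub_four_mul_det_convex A B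
  obtain ⟨z₁, z₂, hsum, hprod⟩ := exists_add_eq_and_mul_eq (k / (lam₁ - lam₂) ^ 2) ((r : ℂ) ^ 2)
  obtain ⟨u, hu, hu2, hu0, hu1⟩ := exists_sqrt_path_of_mul_eq_sq hr hprod
  refine ⟨_, isEigenpathSet_two_of_sq_eq_discr (by fun_prop) (D := fun α => (lam₁ - lam₂) * u α)
    (continuousOn_const.mul hu) fun α _ => ?_, ?_, ?_, ?_, ?_⟩
  · have hk' : (lam₁ - lam₂) ^ 2 * (z₁ + z₂) = k := by rw [hsum]; field_simp
    simp only [ofReal_sub, ofReal_one, hk, mul_pow, hu2, htA, hdA, htB, hdB]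
    linear_combination (α : ℂ) * (1 - α) * hk' + (α : ℂ) ^ 2 * (lam₁ - lam₂) ^ 2 * hprod -
      (α : ℂ) ^ 2 * (mu₁ - mu₂ + r * (lam₁ - lam₂)) * hμ
  · simp [htA, hu0]
  · simp [htA, hu0]
  · simp [htB, hu1]
    linear_combination -hμ / 2
  · simp [htB, hu1]
    linear_combination hμ / 2

theorem identity_pairing_of_pos_real_ratio
    (A B : Matrix (Fin 2) (Fin 2) ℂ) (lam₁ lam₂ mu₁ mu₂ : ℂ)
    (hA : (Matrix.charpoly A).roots = {lam₁, lam₂}) (hlam : lam₁ ≠ lam₂)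
    (hB : (Matrix.charpoly B).roots = {mu₁, mu₂}) (hmu : mu₁ ≠ mu₂)
    (hratio : ∃ r : ℝ, 0 < r ∧ (mu₁ - mu₂) / (lam₁ - lam₂) = (r : ℂ)) :
    ∃ γ : Fin 2 → ℝ → ℂ,
      IsEigenpathSet 2 (fun α => ((1 - α : ℝ) : ℂ) • A + (α : ℂ) • B) γ ∧
      γ 0 0 = lam₁ ∧ γ 1 0 = lam₂ ∧ γ 0 1 = mu₁ ∧ γ 1 1 = mu₂ :=
  identity_pairing_of_pos_real_ratio_general A B lam₁ lam₂ mu₁ mu₂ hA hlam hB hratio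
end

section
/- Let A, B ∈ M₂(ℂ), where A has distinct eigenvalues λ₁ ≠ λ₂ and B has distinct eigenvalues μ₁ ≠ μ₂. If (μ₁ − μ₂)/(λ₁ − λ₂) is a negative real number, then the swap pairing λ₁ ↦ μ₂, λ₂ ↦ μ₁ is a convex eigenpairing of A and B: there exists an eigenpath set {γ₁, γ₂} of the convex path α ↦ (1−α)A + αB with γ₁(0) = λ₁, γ₂(0) = λ₂, γ₁(1) = μ₂, and γ₂(1) = μ₁. -/
/-!
The eigenvalues of `M α = (1 - α) • A + α • B` are `(tr M α ± s α) / 2` for any square root `s α`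
of the discriminant of `M α`, a quadratic polynomial in `α`. With `d = λ₁ - λ₂` and `ρ = -r > 0`
it factors as `d² (1 - α + α u₁) (1 - α + α u₂)` with `u₁ u₂ = ρ²`, so it suffices to find a
continuous square root of `(1 - α + α u₁) (1 - α + α u₂)` on `[0, 1]` running from `1` to `ρ`;
then `s = d • (that root)` ends at `ρ d = μ₂ - μ₁`, which produces the swap.

Since `u₁ u₂` is a positive real, `u₁` and `u₂` are either both non-real or both real. In the first
case the product of principal square roots works: the segments from `1` to `uᵢ` stay in the slit
plane, and at `α = 1` both roots have positive real part, so their product, a square root of `ρ²`,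
is not `-ρ`. In the second case the principal root of one real factor times the conjugate of the
principal root of the other is continuous in `α` and ends at `√(u₁ u₂) = ρ` (the plain product
would end at `-ρ` when `u₁, u₂ < 0`).
-/

open Polynomial Set

open ComplexConjugate
open scoped ComplexOrder

namespace Complex

lemma sq_sqrt (z : ℂ) : sqrt z ^ 2 = z := cpow_ofNat_inv_pow z 2

lemma re_sqrt_pos {z : ℂ} (hz : z ∈ slitPlane) : 0 < (sqrt z).re := by
  rw [sqrt, cpow_inv_two_re, Real.sqrt_pos]
  rcases mem_slitPlane_iff.1 hz with h | h
  · linarith [norm_nonneg z]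
  · linarith [abs_re_lt_norm.2 h, neg_abs_le z.re]

lemma sqrt_ofReal (x : ℝ) : sqrt x = √x + I * √(-x) := by
  rcases le_total 0 x with hx | hx
  · rw [sqrt_of_nonneg (zero_le_real.2 hx), ofReal_re, Real.sqrt_eq_zero'.2 (neg_nonpos.2 hx)]
    simp
  · have hx' : (0 : ℂ) ≤ ((-x : ℝ) : ℂ) := zero_le_real.2 (neg_nonneg.2 hx)
    have h := sqrt_neg_of_nonneg hx'
    rw [sqrt_of_nonneg hx', ofReal_re, ofReal_neg, neg_neg] at h
    rw [h, Real.sqrt_eq_zero'.2 hx]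
    simp

lemma continuous_sqrt_ofReal : Continuous fun x : ℝ => sqrt x := by
  simp only [sqrt_ofReal]
  fun_prop

lemma sqrt_ofReal_mul_conj_sqrt_ofReal {x y : ℝ} (h : 0 ≤ x * y) :
    sqrt x * conj (sqrt y) = √(x * y) := by
  rw [sqrt_ofReal, sqrt_ofReal]
  rcases mul_nonneg_iff.1 h with ⟨hx, hy⟩ | ⟨hx, hy⟩
  · rw [Real.sqrt_eq_zero'.2 (neg_nonpos.2 hx), Real.sqrt_eq_zero'.2 (neg_nonpos.2 hy),
      Real.sqrt_mul hx]
    simp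
  · rw [Real.sqrt_eq_zero'.2 hx, Real.sqrt_eq_zero'.2 hy, ← neg_mul_neg x y,
      Real.sqrt_mul (neg_nonneg.2 hx)]
    simp only [ofReal_zero, zero_add, map_mul, conj_ofReal, conj_I, ofReal_mul]
    linear_combination (-(√(-x) : ℂ) * √(-y)) * I_sq

lemma mul_ne_neg_ofReal_of_re_pos_s4 {z w : ℂ} (hz : 0 < z.re) (hw : 0 < w.re) {t : ℝ}
    (ht : 0 < t) : z * w ≠ -t := by
  intro h
  have hz0 : z ≠ 0 := fun h0 => by simp [h0] at hz
  have hw' : w = ((-t : ℝ) : ℂ) * z⁻¹ := by field_simp; push_cast; linear_combination h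
  have : w.re = -t * (z.re / normSq z) := by
    rw [hw', re_ofReal_mul, inv_re]
  have : 0 < z.re / normSq z := div_pos hz (normSq_pos.2 hz0)
  nlinarith

end Complex

section SqrtPath

open Complex

lemma exists_sqrt_path_of_mem_slitPlane {u₁ u₂ : ℂ} (h₁ : u₁ ∈ slitPlane) (h₂ : u₂ ∈ slitPlane)
    {ρ : ℝ} (hρ : 0 < ρ) (hu : u₁ * u₂ = ρ ^ 2) :
    ∃ s : ℝ → ℂ, ContinuousOn s (Icc 0 1) ∧
      (∀ α : ℝ, s α ^ 2 = (1 - α + α * u₁) * (1 - α + α * u₂)) ∧ s 0 = 1 ∧ s 1 = ρ := by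
  have mem {u : ℂ} (hu : u ∈ slitPlane) :
      MapsTo (fun α : ℝ => 1 - α + α * u) (Icc 0 1) slitPlane := fun α ⟨h0, h1⟩ => by
      simpa [real_smul] using starConvex_one_slitPlane hu (sub_nonneg.2 h1) h0 (by ring)
  refine ⟨fun α => sqrt (1 - α + α * u₁) * sqrt (1 - α + α * u₂), ?_, fun α => ?_, by simp, ?_⟩
  · exact (continuousOn_sqrt.comp (by fun_prop) (mem h₁)).mul
      (continuousOn_sqrt.comp (by fun_prop) (mem h₂))
  · rw [mul_pow, sq_sqrt, sq_sqrt]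
  · have hsq : (sqrt u₁ * sqrt u₂) ^ 2 = (ρ : ℂ) ^ 2 := by rw [mul_pow, sq_sqrt, sq_sqrt, hu]
    simp only [ofReal_one, sub_self, one_mul, zero_add]
    exact (sq_eq_sq_iff_eq_or_eq_neg.1 hsq).resolve_right
      (mul_ne_neg_ofReal_of_re_pos_s4 (re_sqrt_pos h₁) (re_sqrt_pos h₂) hρ)

lemma exists_sqrt_path_of_real {a b ρ : ℝ} (hρ : 0 ≤ ρ) (hab : a * b = ρ ^ 2) :
    ∃ s : ℝ → ℂ, ContinuousOn s (Icc 0 1) ∧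
      (∀ α : ℝ, s α ^ 2 = (1 - α + α * a) * (1 - α + α * b)) ∧ s 0 = 1 ∧ s 1 = ρ := by
  refine ⟨fun α => sqrt ((1 - α + α * a : ℝ) : ℂ) * conj (sqrt ((1 - α + α * b : ℝ) : ℂ)),
    ?_, fun α => ?_, by simp, ?_⟩
  · exact ((continuous_sqrt_ofReal.comp (by fun_prop)).mul
      (continuous_conj.comp (continuous_sqrt_ofReal.comp (by fun_prop)))).continuousOn
  · rw [mul_pow, ← map_pow, sq_sqrt, sq_sqrt, conj_ofReal]
    push_cast
    ring
  · simp only [sub_self, one_mul, zero_add]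
    rw [sqrt_ofReal_mul_conj_sqrt_ofReal (hab ▸ sq_nonneg ρ), hab, Real.sqrt_sq hρ]

lemma exists_sqrt_path_of_mul_eq_sq_s4 {u₁ u₂ : ℂ} {ρ : ℝ} (hρ : 0 < ρ) (hu : u₁ * u₂ = ρ ^ 2) :
    ∃ s : ℝ → ℂ, ContinuousOn s (Icc 0 1) ∧
      (∀ α : ℝ, s α ^ 2 = (1 - α + α * u₁) * (1 - α + α * u₂)) ∧ s 0 = 1 ∧ s 1 = ρ := by
  have hre := congrArg re hu
  have him := congrArg im hu
  simp only [mul_re, mul_im, ← ofReal_pow, ofReal_re, ofReal_im] at hre him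
  have hρ2 : ρ ^ 2 ≠ 0 := by positivity
  by_cases h₁ : u₁.im = 0
  · have h₂ : u₂.im = 0 := by
      rw [h₁, zero_mul, add_zero] at him
      refine (mul_eq_zero.1 him).resolve_left fun h => hρ2 ?_
      rw [← hre, h, h₁]; ring
    have ofReal_re_eq {u : ℂ} (h : u.im = 0) : (u.re : ℂ) = u := ext rfl (by simp [h])
    rw [← ofReal_re_eq h₁, ← ofReal_re_eq h₂]
    exact exists_sqrt_path_of_real hρ.le (by rw [← hre, h₁, h₂]; ring)
  · have h₂ : u₂.im ≠ 0 := by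
      intro h₂
      rw [h₂, mul_zero, zero_add] at him
      have : u₂.re = 0 := (mul_eq_zero.1 him).resolve_left h₁
      exact hρ2 (by rw [← hre, h₂, this]; ring)
    exact exists_sqrt_path_of_mem_slitPlane (mem_slitPlane_iff.2 (.inr h₁))
      (mem_slitPlane_iff.2 (.inr h₂)) hρ hu

lemma exists_sqrt_path_quadratic {d β : ℂ} (hd : d ≠ 0) {ρ : ℝ} (hρ : 0 < ρ) :
    ∃ s : ℝ → ℂ, ContinuousOn s (Icc 0 1) ∧
      (∀ α : ℝ, s α ^ 2 = (1 - α) ^ 2 * d ^ 2 + (1 - α) * α * β + α ^ 2 * (ρ * d) ^ 2) ∧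
      s 0 = d ∧ s 1 = ρ * d := by
  obtain ⟨k, rfl⟩ : ∃ k, β = k * d ^ 2 := ⟨β / d ^ 2, by field_simp⟩
  obtain ⟨δ, hδ⟩ := IsAlgClosed.exists_pow_nat_eq (k ^ 2 - 4 * ρ ^ 2) two_pos
  obtain ⟨s, hs, hsq, hs0, hs1⟩ :=
    exists_sqrt_path_of_mul_eq_sq_s4 (u₁ := (k + δ) / 2) (u₂ := (k - δ) / 2) hρ
      (by linear_combination -hδ / 4)
  refine ⟨fun α => d * s α, continuousOn_const.mul hs, fun α => ?_, by simp [hs0], by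
    simp [hs1, mul_comm]⟩
  rw [mul_pow, hsq]
  linear_combination (-d ^ 2 * α ^ 2 / 4) * hδ

end SqrtPath

namespace Matrix

variable {R : Type*} [CommRing R]

lemma discr_smul_add_smul (a b : R) (A B : Matrix (Fin 2) (Fin 2) R) :
    discr (a • A + b • B) = a ^ 2 * discr A
      + a * b * (4 * (A * B).trace - 2 * A.trace * B.trace) + b ^ 2 * discr B := by
  simp only [discr_fin_two, trace_fin_two, det_fin_two, mul_apply, Fin.sum_univ_two, add_apply,
    smul_apply, smul_eq_mul]
  ring

lemma roots_charpoly_fin_two [IsDomain R] {M : Matrix (Fin 2) (Fin 2) R} {p q : R}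
    (hadd : p + q = M.trace) (hmul : p * q = M.det) : M.charpoly.roots = {p, q} := by
  have : M.charpoly = (X - C p) * (X - C q) := by
    rw [charpoly_fin_two, ← hadd, ← hmul, C_add, C_mul]
    ring
  rw [this, roots_mul (mul_ne_zero (X_sub_C_ne_zero p) (X_sub_C_ne_zero q)), roots_X_sub_C,
    roots_X_sub_C]
  rfl

lemma trace_discr_of_roots_charpoly {K : Type*} [Field K] [IsAlgClosed K]
    {M : Matrix (Fin 2) (Fin 2) K} {p q : K} (h : M.charpoly.roots = {p, q}) :
    M.trace = p + q ∧ M.discr = (p - q) ^ 2 := by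
  have htr : M.trace = p + q := by simp [trace_eq_sum_roots_charpoly, h]
  have hdet : M.det = p * q := by simp [det_eq_prod_roots_charpoly, h]
  exact ⟨htr, by rw [discr_fin_two, htr, hdet]; ring⟩

end Matrix

lemma isEigenpathSet_of_sq_eq_discr {C : ℝ → Matrix (Fin 2) (Fin 2) ℂ}
    (hC : ContinuousOn C (Icc 0 1)) {s : ℝ → ℂ} (hs : ContinuousOn s (Icc 0 1))
    (hsq : ∀ α ∈ Icc (0 : ℝ) 1, s α ^ 2 = (C α).discr) :
    IsEigenpathSet 2 C ![fun α => ((C α).trace + s α) / 2, fun α => ((C α).trace - s α) / 2] := by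
  have htr : ContinuousOn (fun α => (C α).trace) (Icc 0 1) :=
    continuous_id.matrix_trace.comp_continuousOn hC
  refine ⟨fun j => ?_, fun α hα => ?_⟩
  · fin_cases j
    · exact (htr.add hs).div_const 2
    · exact (htr.sub hs).div_const 2
  · change {((C α).trace + s α) / 2, ((C α).trace - s α) / 2} = _
    refine (Matrix.roots_charpoly_fin_two (by ring) ?_).symm
    linear_combination (-1 / 4 : ℂ) * hsq α hα - (1 / 4 : ℂ) * (C α).discr_fin_two

theorem swap_pairing_of_neg_real_ratio_general
    (A B : Matrix (Fin 2) (Fin 2) ℂ) (lam₁ lam₂ mu₁ mu₂ : ℂ)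
    (hA : (Matrix.charpoly A).roots = {lam₁, lam₂})
    (hB : (Matrix.charpoly B).roots = {mu₁, mu₂})
    (hratio : ∃ r : ℝ, r < 0 ∧ (mu₁ - mu₂) / (lam₁ - lam₂) = (r : ℂ)) :
    ∃ γ : Fin 2 → ℝ → ℂ,
      IsEigenpathSet 2 (fun α => ((1 - α : ℝ) : ℂ) • A + (α : ℂ) • B) γ ∧
      γ 0 0 = lam₁ ∧ γ 1 0 = lam₂ ∧ γ 0 1 = mu₂ ∧ γ 1 1 = mu₁ := by
  obtain ⟨r, hr, hratio⟩ := hratio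
  have hlam : lam₁ - lam₂ ≠ 0 := fun h => by
    rw [h, div_zero, eq_comm, Complex.ofReal_eq_zero] at hratio
    exact hr.ne hratio
  have hmu : mu₂ - mu₁ = (-r : ℝ) * (lam₁ - lam₂) := by
    rw [div_eq_iff hlam] at hratio
    push_cast
    linear_combination -hratio
  obtain ⟨htrA, hdiscrA⟩ := Matrix.trace_discr_of_roots_charpoly hA
  obtain ⟨htrB, hdiscrB⟩ := Matrix.trace_discr_of_roots_charpoly hB
  obtain ⟨s, hs, hsq, hs0, hs1⟩ :=
    exists_sqrt_path_quadratic (β := 4 * (A * B).trace - 2 * A.trace * B.trace) hlam (neg_pos.2 hr)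
  refine ⟨_, isEigenpathSet_of_sq_eq_discr (by fun_prop) hs fun α _ => ?_, ?_, ?_, ?_, ?_⟩
  · rw [hsq, Matrix.discr_smul_add_smul, hdiscrA, hdiscrB, ← hmu]
    push_cast
    ring
  all_goals
    simp only [Matrix.cons_val_zero, Matrix.cons_val_one, Complex.ofReal_zero, Complex.ofReal_one,
      sub_zero, sub_self, zero_smul, one_smul, add_zero, zero_add, hs0, hs1, htrA, htrB, ← hmu]
    ring

theorem swap_pairing_of_neg_real_ratio
    (A B : Matrix (Fin 2) (Fin 2) ℂ) (lam₁ lam₂ mu₁ mu₂ : ℂ)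
    (hA : (Matrix.charpoly A).roots = {lam₁, lam₂}) (hlam : lam₁ ≠ lam₂)
    (hB : (Matrix.charpoly B).roots = {mu₁, mu₂}) (hmu : mu₁ ≠ mu₂)
    (hratio : ∃ r : ℝ, r < 0 ∧ (mu₁ - mu₂) / (lam₁ - lam₂) = (r : ℂ)) :
    ∃ γ : Fin 2 → ℝ → ℂ,
      IsEigenpathSet 2 (fun α => ((1 - α : ℝ) : ℂ) • A + (α : ℂ) • B) γ ∧
      γ 0 0 = lam₁ ∧ γ 1 0 = lam₂ ∧ γ 0 1 = mu₂ ∧ γ 1 1 = mu₁ :=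
  swap_pairing_of_neg_real_ratio_general A B lam₁ lam₂ mu₁ mu₂ hA hB hratio
end

section
/- Let n ≥ 1 and let C be a matrix path in M_n(ℂ). Then the set of singular ambiguities of the C-eigenregion E_C is a compact subset of ℂ × [0,1]. -/
open Polynomial Set

/-- The `C`-eigenregion: pairs `(λ, α)` with `α ∈ [0,1]` and `λ` an eigenvalue of `C α`. -/
def eigenRegion (n : ℕ) (C : ℝ → Matrix (Fin n) (Fin n) ℂ) : Set (ℂ × ℝ) :=
  {p | p.2 ∈ Set.Icc (0 : ℝ) 1 ∧ (Matrix.charpoly (C p.2)).IsRoot p.1}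

/-- The multiplicity of `p.1` as a root of the characteristic polynomial of `C p.2`. -/
noncomputable def eigMult (n : ℕ) (C : ℝ → Matrix (Fin n) (Fin n) ℂ) (p : ℂ × ℝ) : ℕ :=
  (Matrix.charpoly (C p.2)).rootMultiplicity p.1

/-- `p` is a singular ambiguity of the `C`-eigenregion: it is a repeated eigenvalue,
and every open neighborhood of `p` in the eigenregion contains a point of strictly
smaller multiplicity. -/
def IsSingularAmbiguity (n : ℕ) (C : ℝ → Matrix (Fin n) (Fin n) ℂ) (p : ℂ × ℝ) : Prop :=
  p ∈ eigenRegion n C ∧ 2 ≤ eigMult n C p ∧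
  ∀ U : Set (ℂ × ℝ), IsOpen U → p ∈ U →
    ∃ q ∈ eigenRegion n C ∩ U, eigMult n C q < eigMult n C p

namespace SingAmbAux

variable {n : ℕ}

lemma eval_charpoly (M : Matrix (Fin n) (Fin n) ℂ) (z : ℂ) :
    (Matrix.charpoly M).eval z
      = (Matrix.of (fun i j => (if i = j then z else 0) - M i j)).det := by
  have h : (Matrix.charmatrix M).map (Polynomial.evalRingHom z)
      = Matrix.of (fun i j => (if i = j then z else 0) - M i j) := by
    ext i j
    by_cases h : i = j <;>
      simp [Matrix.charmatrix_apply, Matrix.diagonal_apply, h]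
  have h2 := (RingHom.map_det (Polynomial.evalRingHom z) (Matrix.charmatrix M)).symm
  rw [RingHom.mapMatrix_apply, h] at h2
  simpa [Matrix.charpoly] using h2.symm

lemma continuous_eval_charpoly :
    Continuous fun p : Matrix (Fin n) (Fin n) ℂ × ℂ => (Matrix.charpoly p.1).eval p.2 := by
  simp_rw [eval_charpoly]
  refine Continuous.matrix_det (continuous_matrix fun i j => ?_)
  by_cases h : i = j <;> simp only [Matrix.of_apply, h, if_true, if_false] <;> fun_prop

/-- Continuity of each coefficient of the characteristic polynomial, via
Lagrange interpolation at the nodes `0, 1, ..., n`. -/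
lemma continuous_coeff_charpoly (k : ℕ) :
    Continuous fun M : Matrix (Fin n) (Fin n) ℂ => (Matrix.charpoly M).coeff k := by
  classical
  have hv : Set.InjOn (fun i : Fin (n + 1) => (i : ℂ)) (Finset.univ : Finset (Fin (n + 1))) := by
    intro a _ b _ hab
    exact Fin.ext (Nat.cast_injective hab)
  have hdeg : ∀ M : Matrix (Fin n) (Fin n) ℂ,
      (Matrix.charpoly M).degree < (Finset.univ : Finset (Fin (n + 1))).card := by
    intro M
    rw [Finset.card_univ, Fintype.card_fin]
    calc (Matrix.charpoly M).degree ≤ (Matrix.charpoly M).natDegree :=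
          Polynomial.degree_le_natDegree
      _ < (n + 1 : ℕ) := by
          rw [Matrix.charpoly_natDegree_eq_dim, Fintype.card_fin]
          exact_mod_cast Nat.lt_succ_self n
  have key : ∀ M : Matrix (Fin n) (Fin n) ℂ,
      (Matrix.charpoly M).coeff k
        = ∑ i : Fin (n + 1), (Matrix.charpoly M).eval ((i : ℕ) : ℂ)
            * (Lagrange.basis Finset.univ (fun i : Fin (n + 1) => (i : ℂ)) i).coeff k := by
    intro M
    conv_lhs => rw [Lagrange.eq_interpolate hv (hdeg M)]
    rw [Lagrange.interpolate_apply, Polynomial.finset_sum_coeff]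
    simp [Polynomial.coeff_C_mul]
  simp_rw [key]
  refine continuous_finset_sum _ fun i _ => ?_
  exact (continuous_eval_charpoly.comp
    (continuous_id.prodMk continuous_const)).mul continuous_const

section

variable (n) (C : ℝ → Matrix (Fin n) (Fin n) ℂ)

/-- The relatively closed "multiplicity at least m" sets. -/
def K (m : ℕ) : Set (ℂ × ℝ) :=
  {p : ℂ × ℝ | p.2 ∈ Set.Icc (0 : ℝ) 1 ∧ m ≤ eigMult n C p}

variable {n C}

lemma le_eigMult_iff (m : ℕ) (p : ℂ × ℝ) :
    m ≤ eigMult n C p ↔ ∀ j < m, (Polynomial.derivative^[j] (Matrix.charpoly (C p.2))).IsRoot p.1 := by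
  have hne : Matrix.charpoly (C p.2) ≠ 0 := (Matrix.charpoly_monic _).ne_zero
  cases m with
  | zero => simp
  | succ m =>
      rw [Nat.succ_le_iff, eigMult,
        Polynomial.lt_rootMultiplicity_iff_isRoot_iterate_derivative hne]
      constructor
      · intro h j hj; exact h j (Nat.lt_succ_iff.mp hj)
      · intro h j hj; exact h j (Nat.lt_succ_iff.mpr hj)

lemma continuousOn_G (hC : ContinuousOn C (Set.Icc 0 1)) (j : ℕ) :
    ContinuousOn
      (fun p : ℂ × ℝ => (Polynomial.derivative^[j] (Matrix.charpoly (C p.2))).eval p.1)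
      ((Set.univ : Set ℂ) ×ˢ Set.Icc (0 : ℝ) 1) := by
  have hdeg : ∀ α : ℝ, (Polynomial.derivative^[j] (Matrix.charpoly (C α))).natDegree < n + 1 := by
    intro α
    calc (Polynomial.derivative^[j] (Matrix.charpoly (C α))).natDegree
        ≤ (Matrix.charpoly (C α)).natDegree - j := Polynomial.natDegree_iterate_derivative _ _
      _ ≤ (Matrix.charpoly (C α)).natDegree := Nat.sub_le _ _
      _ < n + 1 := by
          rw [Matrix.charpoly_natDegree_eq_dim, Fintype.card_fin]; exact Nat.lt_succ_self n
  have key : ∀ p : ℂ × ℝ,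
      (Polynomial.derivative^[j] (Matrix.charpoly (C p.2))).eval p.1
        = ∑ i ∈ Finset.range (n + 1),
            (((i + j).descFactorial j : ℂ) * (Matrix.charpoly (C p.2)).coeff (i + j)) * p.1 ^ i := by
    intro p
    rw [Polynomial.eval_eq_sum_range' (hdeg p.2)]
    refine Finset.sum_congr rfl fun i _ => ?_
    rw [Polynomial.coeff_iterate_derivative]
    simp [nsmul_eq_mul]
  simp_rw [key]
  refine continuousOn_finset_sum _ fun i _ => ContinuousOn.mul (ContinuousOn.mul ?_ ?_) ?_
  · exact continuousOn_const
  · refine ((continuous_coeff_charpoly (i + j)).comp_continuousOn ?_)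
    exact hC.comp continuousOn_snd fun p hp => hp.2
  · exact (continuous_fst.pow i).continuousOn

lemma isClosed_K (hC : ContinuousOn C (Set.Icc 0 1)) {m : ℕ} (hm : 1 ≤ m) :
    IsClosed (K n C m) := by
  have hK : K n C m = ⋂ j ∈ Finset.range m,
      (((Set.univ : Set ℂ) ×ˢ Set.Icc (0 : ℝ) 1) ∩
        (fun p : ℂ × ℝ => (Polynomial.derivative^[j] (Matrix.charpoly (C p.2))).eval p.1) ⁻¹' {0}) := by
    ext p
    simp only [K, Set.mem_setOf_eq, Set.mem_iInter, Set.mem_inter_iff, Set.mem_preimage,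
      Set.mem_singleton_iff, Finset.mem_range, Set.mem_prod, Set.mem_univ, true_and,
      le_eigMult_iff]
    constructor
    · rintro ⟨h1, h2⟩ j hj; exact ⟨h1, h2 j hj⟩
    · intro h
      refine ⟨(h 0 (Nat.lt_of_lt_of_le Nat.zero_lt_one hm)).1, fun j hj => (h j hj).2⟩
  rw [hK]
  refine isClosed_biInter fun j _ => ?_
  exact (continuousOn_G hC j).preimage_isClosed_of_isClosed
    (isClosed_univ.prod isClosed_Icc) isClosed_singleton

/-- A bound on the norms of roots of a monic polynomial. -/
lemma norm_root_le {p : ℂ[X]} (hp : p.Monic) {z : ℂ} (hz : p.IsRoot z) :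
    ‖z‖ ≤ 1 + ∑ i ∈ Finset.range p.natDegree, ‖p.coeff i‖ := by
  set d := p.natDegree with hd
  have hS : (0 : ℝ) ≤ ∑ i ∈ Finset.range d, ‖p.coeff i‖ :=
    Finset.sum_nonneg fun _ _ => norm_nonneg _
  rcases le_or_gt ‖z‖ 1 with h1 | h1
  · linarith
  · -- z^d = -∑_{i<d} c_i z^i
    have heval : p.eval z = ∑ i ∈ Finset.range (d + 1), p.coeff i * z ^ i :=
      Polynomial.eval_eq_sum_range' (Nat.lt_succ_self d) z
    have hzero : (0 : ℂ) = z ^ d + ∑ i ∈ Finset.range d, p.coeff i * z ^ i := by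
      have := hz
      rw [Polynomial.IsRoot, heval, Finset.sum_range_succ, hp.coeff_natDegree, one_mul] at this
      rw [← this]; ring
    have hnorm : ‖z‖ ^ d ≤ (∑ i ∈ Finset.range d, ‖p.coeff i‖) * ‖z‖ ^ (d - 1) := by
      have : ‖z ^ d‖ = ‖∑ i ∈ Finset.range d, p.coeff i * z ^ i‖ := by
        rw [show z ^ d = -(∑ i ∈ Finset.range d, p.coeff i * z ^ i) by
          rw [eq_neg_iff_add_eq_zero]; exact hzero.symm]
        rw [norm_neg]
      rw [norm_pow] at this
      rw [this]
      calc ‖∑ i ∈ Finset.range d, p.coeff i * z ^ i‖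
          ≤ ∑ i ∈ Finset.range d, ‖p.coeff i * z ^ i‖ := norm_sum_le _ _
        _ ≤ ∑ i ∈ Finset.range d, ‖p.coeff i‖ * ‖z‖ ^ (d - 1) := by
            refine Finset.sum_le_sum fun i hi => ?_
            rw [norm_mul, norm_pow]
            refine mul_le_mul_of_nonneg_left ?_ (norm_nonneg _)
            exact pow_le_pow_right₀ h1.le (Nat.le_sub_one_of_lt (Finset.mem_range.mp hi))
        _ = (∑ i ∈ Finset.range d, ‖p.coeff i‖) * ‖z‖ ^ (d - 1) := by
            rw [Finset.sum_mul]
    have hd1 : 1 ≤ d := by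
      by_contra hcon
      push_neg at hcon
      interval_cases d
      · -- d = 0 : p = 1, no roots... but z root of monic degree 0 means eval = 1 = 0
        have : p = 1 := Polynomial.eq_one_of_monic_natDegree_zero hp hd.symm
        rw [this] at hz
        simp [Polynomial.IsRoot] at hz
    have hzd : ‖z‖ ^ d = ‖z‖ * ‖z‖ ^ (d - 1) := by
      rw [← pow_succ']
      congr 1
      omega
    rw [hzd] at hnorm
    have hpos : (0 : ℝ) < ‖z‖ ^ (d - 1) := pow_pos (lt_trans zero_lt_one h1) _
    have : ‖z‖ ≤ ∑ i ∈ Finset.range d, ‖p.coeff i‖ := le_of_mul_le_mul_right hnorm hpos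
    linarith

lemma isCompact_K2 (hn : 1 ≤ n) (hC : ContinuousOn C (Set.Icc 0 1)) :
    IsCompact (K n C 2) := by
  -- bound on coefficients over the compact interval
  have hcont : ContinuousOn
      (fun α : ℝ => ∑ i ∈ Finset.range n, ‖(Matrix.charpoly (C α)).coeff i‖)
      (Set.Icc (0 : ℝ) 1) := by
    refine continuousOn_finset_sum _ fun i _ => ?_
    exact ((continuous_coeff_charpoly i).comp_continuousOn hC).norm
  obtain ⟨B, hB⟩ := isCompact_Icc.exists_bound_of_continuousOn hcont
  have hsub : K n C 2 ⊆ Metric.closedBall (0 : ℂ) (1 + B) ×ˢ Set.Icc (0 : ℝ) 1 := by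
    rintro ⟨z, α⟩ ⟨hα, hm⟩
    have hroot : (Matrix.charpoly (C α)).IsRoot z := by
      have hne : Matrix.charpoly (C α) ≠ 0 := (Matrix.charpoly_monic _).ne_zero
      exact (Polynomial.rootMultiplicity_pos hne).mp (lt_of_lt_of_le Nat.zero_lt_two hm)
    have hb := norm_root_le (Matrix.charpoly_monic (C α)) hroot
    rw [Matrix.charpoly_natDegree_eq_dim, Fintype.card_fin] at hb
    have hB' := hB α hα
    have hBle : ∑ i ∈ Finset.range n, ‖(Matrix.charpoly (C α)).coeff i‖ ≤ B :=
      le_trans (le_abs_self _) (by simpa [Real.norm_eq_abs] using hB')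
    constructor
    · simp only [Metric.mem_closedBall, dist_zero_right]
      linarith
    · exact hα
  exact IsCompact.of_isClosed_subset
    ((isCompact_closedBall _ _).prod isCompact_Icc)
    (isClosed_K hC (by norm_num)) hsub

end

end SingAmbAux

open SingAmbAux in
theorem singularAmbiguities_isCompact
    (n : ℕ) (hn : 1 ≤ n)
    (C : ℝ → Matrix (Fin n) (Fin n) ℂ) (hC : ContinuousOn C (Set.Icc 0 1)) :
    IsCompact {p : ℂ × ℝ | IsSingularAmbiguity n C p} := by
  set S := {p : ℂ × ℝ | IsSingularAmbiguity n C p} with hS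
  have hsub : S ⊆ K n C 2 := by
    rintro p ⟨⟨hIcc, _⟩, h2, _⟩
    exact ⟨hIcc, h2⟩
  have hK2 : IsCompact (K n C 2) := isCompact_K2 hn hC
  refine IsCompact.of_isClosed_subset hK2 ?_ hsub
  -- S is closed
  refine isClosed_of_closure_subset ?_
  intro p hp
  have hpK2 : p ∈ K n C 2 := by
    have h1 := closure_mono hsub hp
    rwa [(isClosed_K hC (m := 2) (by norm_num)).closure_eq] at h1
  obtain ⟨hpIcc, hp2⟩ := hpK2
  have hroot : (Matrix.charpoly (C p.2)).IsRoot p.1 :=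
    (Polynomial.rootMultiplicity_pos (Matrix.charpoly_monic _).ne_zero).mp
      (lt_of_lt_of_le Nat.zero_lt_two hp2)
  refine ⟨⟨hpIcc, hroot⟩, hp2, ?_⟩
  intro U hU hpU
  set m := eigMult n C p with hm
  have hclosed : IsClosed (K n C (m + 1)) := isClosed_K hC (by omega)
  have hpnot : p ∉ K n C (m + 1) := by
    rintro ⟨-, hle⟩
    omega
  have hVopen : IsOpen (U ∩ (K n C (m + 1))ᶜ) := hU.inter hclosed.isOpen_compl
  have hpV : p ∈ U ∩ (K n C (m + 1))ᶜ := ⟨hpU, hpnot⟩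
  obtain ⟨q, hqV, hqS⟩ := (mem_closure_iff.mp hp) _ hVopen hpV
  obtain ⟨hqRegion, hq2, hqProp⟩ := hqS
  have hqle : eigMult n C q ≤ m := by
    by_contra hcon
    push_neg at hcon
    exact hqV.2 ⟨hqRegion.1, hcon⟩
  obtain ⟨r, ⟨hrRegion, hrV⟩, hrlt⟩ := hqProp _ hVopen hqV
  exact ⟨r, ⟨hrRegion, hrV.1⟩, lt_of_lt_of_le hrlt hqle⟩
end

section
/- Let n ≥ 1 and let C : [0,1] → M_n(ℂ) be a matrix path such that each entry function α ↦ (C_α)_{ij} is real-analytic on an open neighborhood of [0,1] in ℝ. Let γ be a C-eigenpath and let α₀ ∈ [0,1] be such that (γ(α₀), α₀) is not a singular ambiguity of E_C. Then γ is infinitely differentiable (C^∞) on a neighborhood of α₀ in [0,1]. -/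
open Polynomial Set

-- L0: eval of charpoly as det
lemma eval_charpoly' {n : ℕ} (M : Matrix (Fin n) (Fin n) ℂ) (t : ℂ) :
    (Matrix.charpoly M).eval t = (Matrix.diagonal (fun _ => t) - M).det := by
  rw [Matrix.charpoly, ← Polynomial.coe_evalRingHom, RingHom.map_det]
  congr 1
  ext i j
  by_cases h : i = j
  · subst h
    simp [Matrix.charmatrix_apply_eq, Matrix.map_apply, Matrix.diagonal_apply_eq]
  · simp [Matrix.charmatrix_apply_ne _ _ _ h, Matrix.map_apply, Matrix.diagonal_apply_ne _ h,
      Matrix.sub_apply]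

-- L1: det of analytic matrix is analytic
lemma analyticOnNhd_det {n : ℕ} {U : Set ℝ} (A : ℝ → Matrix (Fin n) (Fin n) ℂ)
    (hA : ∀ i j, AnalyticOnNhd ℝ (fun α => A α i j) U) :
    AnalyticOnNhd ℝ (fun α => (A α).det) U := by
  have : (fun α => (A α).det) =
      (fun α => ∑ σ : Equiv.Perm (Fin n),
        (((Equiv.Perm.sign σ : ℤ)) : ℂ) * ∏ i, A α (σ i) i) := by
    funext α
    exact Matrix.det_apply' _
  rw [this]
  apply Finset.analyticOnNhd_fun_sum
  intro σ _
  exact analyticOnNhd_const.mul (Finset.analyticOnNhd_fun_prod _ (fun i _ => hA (σ i) i))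

-- L3: eval of iterated derivative as sum over coefficients
lemma eval_iterate_derivative_eq_sum (p : ℂ[X]) (N j : ℕ) (h : p.natDegree < N) (t : ℂ) :
    (Polynomial.derivative^[j] p).eval t =
      ∑ k ∈ Finset.range N, p.coeff k * (Polynomial.derivative^[j] ((X : ℂ[X]) ^ k)).eval t := by
  conv_lhs => rw [p.as_sum_range' N h]
  rw [Polynomial.iterate_derivative_sum, Polynomial.eval_finset_sum]
  congr 1
  ext k
  rw [← Polynomial.C_mul_X_pow_eq_monomial, Polynomial.iterate_derivative_C_mul,
    Polynomial.eval_mul, Polynomial.eval_C]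

-- L2: coefficients of charpoly are analytic
lemma analyticOnNhd_charpoly_coeff {n : ℕ} {U : Set ℝ} (C : ℝ → Matrix (Fin n) (Fin n) ℂ)
    (hC : ∀ i j, AnalyticOnNhd ℝ (fun α => C α i j) U) (k : ℕ) :
    AnalyticOnNhd ℝ (fun α => (Matrix.charpoly (C α)).coeff k) U := by
  have hinj : Set.InjOn (fun i : ℕ => (i : ℂ)) (Finset.range (n + 1)) :=
    fun a _ b _ hab => Nat.cast_injective hab
  have hdeg : ∀ α : ℝ, (Matrix.charpoly (C α)).degree < (Finset.range (n + 1)).card := by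
    intro α
    rw [Matrix.charpoly_degree_eq_dim, Fintype.card_fin, Finset.card_range]
    exact_mod_cast Nat.lt_succ_self n
  have key : ∀ α : ℝ, (Matrix.charpoly (C α)).coeff k =
      ∑ i ∈ Finset.range (n + 1),
        (Matrix.diagonal (fun _ => (i : ℂ)) - C α).det *
          (Lagrange.basis (Finset.range (n + 1)) (fun i : ℕ => (i : ℂ)) i).coeff k := by
    intro α
    conv_lhs => rw [Lagrange.eq_interpolate hinj (hdeg α)]
    rw [Lagrange.interpolate_apply, Polynomial.finset_sum_coeff]
    congr 1
    ext i
    rw [Polynomial.coeff_C_mul, eval_charpoly']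
  have : (fun α => (Matrix.charpoly (C α)).coeff k) = fun α =>
      ∑ i ∈ Finset.range (n + 1),
        (Matrix.diagonal (fun _ => (i : ℂ)) - C α).det *
          (Lagrange.basis (Finset.range (n + 1)) (fun i : ℕ => (i : ℂ)) i).coeff k :=
    funext key
  rw [this]
  apply Finset.analyticOnNhd_fun_sum
  intro i _
  apply AnalyticOnNhd.mul _ analyticOnNhd_const
  apply analyticOnNhd_det
  intro a b
  exact analyticOnNhd_const.sub (hC a b)

-- CLE construction for the IFT
lemma exists_CLE_hasFDerivAt (F : ℝ × ℂ → ℂ) (pt : ℝ × ℂ)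
    (hF : DifferentiableAt ℝ F pt) {e : ℂ}
    (hpart : HasDerivAt (fun l => F (pt.1, l)) e pt.2) (he : e ≠ 0) :
    ∃ L : (ℝ × ℂ) ≃L[ℝ] (ℝ × ℂ),
      HasFDerivAt (fun p : ℝ × ℂ => (p.1, F p)) (L : (ℝ × ℂ) →L[ℝ] (ℝ × ℂ)) pt := by
  set D := fderiv ℝ F pt with hDdef
  have hD : HasFDerivAt F D pt := hF.hasFDerivAt
  set L' : (ℝ × ℂ) →L[ℝ] (ℝ × ℂ) := (ContinuousLinearMap.fst ℝ ℝ ℂ).prod D with hL'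
  have hGD : HasFDerivAt (fun p : ℝ × ℂ => (p.1, F p)) L' pt :=
    (hasFDerivAt_fst).prodMk hD
  -- compute D (0, dλ)
  have hι : HasFDerivAt (fun l : ℂ => ((pt.1 : ℝ), l))
      (ContinuousLinearMap.inr ℝ ℝ ℂ) pt.2 := by
    have := (hasFDerivAt_const (𝕜 := ℝ) pt.1 pt.2).prodMk (hasFDerivAt_id (𝕜 := ℝ) pt.2)
    exact this
  have hcomp : HasFDerivAt (fun l => F (pt.1, l)) (D.comp (ContinuousLinearMap.inr ℝ ℝ ℂ)) pt.2 := by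
    have := hD.comp pt.2 hι
    exact this
  have hpartF : HasFDerivAt (fun l => F (pt.1, l))
      (((1 : ℂ →L[ℂ] ℂ).smulRight e).restrictScalars ℝ) pt.2 :=
    (hpart.hasFDerivAt).restrictScalars ℝ
  have hDeq : D.comp (ContinuousLinearMap.inr ℝ ℝ ℂ) =
      ((1 : ℂ →L[ℂ] ℂ).smulRight e).restrictScalars ℝ :=
    hcomp.unique hpartF
  have hDval : ∀ dl : ℂ, D (0, dl) = dl * e := by
    intro dl
    have := congrFun (congrArg (fun (f : ℂ →L[ℝ] ℂ) => (f : ℂ → ℂ)) hDeq) dl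
    simpa [smul_eq_mul] using this
  -- injectivity
  have hinj : Function.Injective L' := by
    intro x y hxy
    rw [hL'] at hxy
    simp only [ContinuousLinearMap.prod_apply, Prod.mk.injEq] at hxy
    obtain ⟨h1, h2⟩ := hxy
    simp only [ContinuousLinearMap.coe_fst'] at h1
    have hx : x = (x.1, 0) + (0, x.2) := by simp
    have hy : y = (y.1, 0) + (0, y.2) := by simp
    have hD2 : D (0, x.2) = D (0, y.2) := by
      have := h2
      rw [hx, hy, map_add, map_add] at this
      have h1' : D (x.1, 0) = D (y.1, 0) := by rw [h1]
      linear_combination (norm := module) this - h1'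
    rw [hDval, hDval] at hD2
    have : x.2 = y.2 := by
      exact mul_right_cancel₀ he hD2
    exact Prod.ext h1 this
  have hsurj : Function.Surjective (L' : (ℝ × ℂ) →ₗ[ℝ] (ℝ × ℂ)) :=
    (LinearMap.injective_iff_surjective).mp hinj
  refine ⟨ContinuousLinearEquiv.ofBijective L' (LinearMap.ker_eq_bot.mpr hinj)
    (LinearMap.range_eq_top.mpr hsurj), ?_⟩
  have : (ContinuousLinearEquiv.ofBijective L' (LinearMap.ker_eq_bot.mpr hinj)
      (LinearMap.range_eq_top.mpr hsurj) : (ℝ × ℂ) →L[ℝ] (ℝ × ℂ)) = L' := by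
    exact ContinuousLinearEquiv.coe_ofBijective _ _ _
  rw [this]
  exact hGD

lemma analyticOnNhd_Fsum {n : ℕ} {U : Set ℝ} (C : ℝ → Matrix (Fin n) (Fin n) ℂ)
    (hC : ∀ i j, AnalyticOnNhd ℝ (fun α => C α i j) U) (j : ℕ) :
    AnalyticOnNhd ℝ (fun q : ℝ × ℂ => ∑ k ∈ Finset.range (n + 1),
      (Matrix.charpoly (C q.1)).coeff k * (Polynomial.derivative^[j] ((X : ℂ[X]) ^ k)).eval q.2)
      (U ×ˢ (univ : Set ℂ)) := by
  apply Finset.analyticOnNhd_fun_sum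
  intro k _
  apply AnalyticOnNhd.mul
  · exact (analyticOnNhd_charpoly_coeff C hC k).comp
      ((ContinuousLinearMap.fst ℝ ℝ ℂ).analyticOnNhd _) (fun x hx => hx.1)
  · exact (AnalyticOnNhd.eval_polynomial (𝕜 := ℝ) (Polynomial.derivative^[j] ((X : ℂ[X]) ^ k))).comp
      ((ContinuousLinearMap.snd ℝ ℝ ℂ).analyticOnNhd _) (mapsTo_univ _ _)

theorem eigenpath_smooth_away_from_singular_ambiguities
    (n : ℕ) (hn : 1 ≤ n)
    (C : ℝ → Matrix (Fin n) (Fin n) ℂ)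
    (hC : ∃ U : Set ℝ, IsOpen U ∧ Set.Icc (0 : ℝ) 1 ⊆ U ∧
      ∀ i j, AnalyticOnNhd ℝ (fun α => C α i j) U)
    (γ : ℝ → ℂ) (hγcont : ContinuousOn γ (Set.Icc 0 1))
    (hγroot : ∀ α ∈ Set.Icc (0 : ℝ) 1, (Matrix.charpoly (C α)).IsRoot (γ α))
    (α₀ : ℝ) (hα₀ : α₀ ∈ Set.Icc (0 : ℝ) 1)
    (hns : ¬ IsSingularAmbiguity n C (γ α₀, α₀)) :
    ∃ V : Set ℝ, IsOpen V ∧ α₀ ∈ V ∧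
      ContDiffOn ℝ (⊤ : ℕ∞) γ (V ∩ Set.Icc 0 1) := by
  classical
  obtain ⟨U', hU'open, hIccU', hCanal⟩ := hC
  have hp0ne : ∀ α : ℝ, Matrix.charpoly (C α) ≠ 0 := fun α => (Matrix.charpoly_monic _).ne_zero
  set m : ℕ := (Matrix.charpoly (C α₀)).rootMultiplicity (γ α₀) with hmdef
  have hmeig : eigMult n C (γ α₀, α₀) = m := rfl
  have hm1 : 1 ≤ m :=
    (Polynomial.rootMultiplicity_pos (hp0ne α₀)).mpr (hγroot α₀ hα₀)
  have hreg : (γ α₀, α₀) ∈ eigenRegion n C := ⟨hα₀, hγroot α₀ hα₀⟩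
  -- the multiplicity lower bound neighborhood
  have hW : ∃ W : Set (ℂ × ℝ), IsOpen W ∧ (γ α₀, α₀) ∈ W ∧
      ∀ q ∈ eigenRegion n C ∩ W, m ≤ eigMult n C q := by
    by_cases hm2 : 2 ≤ m
    · by_contra hcon
      push_neg at hcon
      exact hns ⟨hreg, hm2, fun W hWo hWm => by
        obtain ⟨q, hq1, hq2⟩ := hcon W hWo hWm
        exact ⟨q, hq1, by rw [hmeig]; omega⟩⟩
    · refine ⟨univ, isOpen_univ, mem_univ _, fun q hq => ?_⟩
      have : 1 ≤ eigMult n C q :=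
        (Polynomial.rootMultiplicity_pos (hp0ne q.2)).mpr hq.1.2
      omega
  obtain ⟨W, hWo, hWmem, hWmult⟩ := hW
  -- the functions F, Ecal, G
  set F : ℝ × ℂ → ℂ := fun q => ∑ k ∈ Finset.range (n + 1),
    (Matrix.charpoly (C q.1)).coeff k * (Polynomial.derivative^[m - 1] ((X : ℂ[X]) ^ k)).eval q.2
    with hFdef
  set Ecal : ℝ × ℂ → ℂ := fun q => ∑ k ∈ Finset.range (n + 1),
    (Matrix.charpoly (C q.1)).coeff k * (Polynomial.derivative^[m] ((X : ℂ[X]) ^ k)).eval q.2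
    with hEdef
  have hnatdeg : ∀ α : ℝ, (Matrix.charpoly (C α)).natDegree < n + 1 := by
    intro α
    rw [Matrix.charpoly_natDegree_eq_dim, Fintype.card_fin]
    omega
  have hFeq : ∀ q : ℝ × ℂ,
      F q = (Polynomial.derivative^[m - 1] (Matrix.charpoly (C q.1))).eval q.2 :=
    fun q => (eval_iterate_derivative_eq_sum _ _ _ (hnatdeg q.1) q.2).symm
  have hEeq : ∀ q : ℝ × ℂ,
      Ecal q = (Polynomial.derivative^[m] (Matrix.charpoly (C q.1))).eval q.2 :=
    fun q => (eval_iterate_derivative_eq_sum _ _ _ (hnatdeg q.1) q.2).symm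
  have hFanal : AnalyticOnNhd ℝ F (U' ×ˢ (univ : Set ℂ)) := analyticOnNhd_Fsum C hCanal _
  have hEanal : AnalyticOnNhd ℝ Ecal (U' ×ˢ (univ : Set ℂ)) := analyticOnNhd_Fsum C hCanal _
  set G : ℝ × ℂ → ℝ × ℂ := fun q => (q.1, F q) with hGdef
  have hGanal : ∀ q ∈ U' ×ˢ (univ : Set ℂ), AnalyticAt ℝ G q := fun q hq =>
    ((ContinuousLinearMap.fst ℝ ℝ ℂ).analyticAt q).prod (hFanal q hq)
  -- partial derivative of F in the second variable
  have hpart : ∀ (α : ℝ) (l : ℂ), HasDerivAt (fun z => F (α, z)) (Ecal (α, l)) l := by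
    intro α l
    have h1 : (fun z => F (α, z)) =
        fun z => (Polynomial.derivative^[m - 1] (Matrix.charpoly (C α))).eval z :=
      funext fun z => hFeq (α, z)
    rw [h1, hEeq]
    have h2 := (Polynomial.derivative^[m - 1] (Matrix.charpoly (C α))).hasDerivAt l
    have h3 : Polynomial.derivative (Polynomial.derivative^[m - 1] (Matrix.charpoly (C α))) =
        Polynomial.derivative^[m] (Matrix.charpoly (C α)) := by
      rw [← Function.iterate_succ_apply' Polynomial.derivative (m - 1)]
      congr 1
      omega
    rwa [h3] at h2
  -- nonvanishing of Ecal at the base point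
  have hE0 : Ecal (α₀, γ α₀) ≠ 0 := by
    rw [hEeq]
    intro h0
    have hroots : ∀ k ≤ m, (Polynomial.derivative^[k] (Matrix.charpoly (C α₀))).IsRoot (γ α₀) := by
      intro k hk
      rcases eq_or_lt_of_le hk with rfl | hk'
      · exact h0
      · exact Polynomial.isRoot_iterate_derivative_of_lt_rootMultiplicity (by omega)
    have hlt := Polynomial.lt_rootMultiplicity_of_isRoot_iterate_derivative_of_mem_nonZeroDivisors'
      (hp0ne α₀) hroots (fun l _ hl0 =>
        mem_nonZeroDivisors_of_ne_zero (by exact_mod_cast Nat.cast_ne_zero.mpr hl0))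
    omega
  -- IFT at the base point
  have hptU : (α₀, γ α₀) ∈ U' ×ˢ (univ : Set ℂ) := ⟨hIccU' hα₀, mem_univ _⟩
  obtain ⟨L₀, hL₀⟩ := exists_CLE_hasFDerivAt F (α₀, γ α₀)
    (hFanal _ hptU).differentiableAt (hpart α₀ (γ α₀)) hE0
  have hGcd : ∀ q ∈ U' ×ˢ (univ : Set ℂ), ContDiffAt ℝ (⊤ : ℕ∞) G q := fun q hq =>
    (hGanal q hq).contDiffAt
  have hGstrict : HasStrictFDerivAt G (L₀ : (ℝ × ℂ) →L[ℝ] (ℝ × ℂ)) (α₀, γ α₀) :=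
    (hGcd _ hptU).hasStrictFDerivAt' hL₀ (by simp)
  set Ψ : OpenPartialHomeomorph (ℝ × ℂ) (ℝ × ℂ) := hGstrict.toOpenPartialHomeomorph G with hΨdef
  have hΨcoe : (Ψ : ℝ × ℂ → ℝ × ℂ) = G := hGstrict.toOpenPartialHomeomorph_coe
  have hΨsource : (α₀, γ α₀) ∈ Ψ.source := hGstrict.mem_toOpenPartialHomeomorph_source
  -- eventual conditions along the path
  have hγw : ContinuousWithinAt γ (Set.Icc 0 1) α₀ := hγcont α₀ hα₀
  have hΦ : ContinuousWithinAt (fun α => ((γ α, α) : ℂ × ℝ)) (Set.Icc 0 1) α₀ :=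
    hγw.prodMk (continuousWithinAt_id)
  have hΦ' : ContinuousWithinAt (fun α => ((α, γ α) : ℝ × ℂ)) (Set.Icc 0 1) α₀ :=
    (continuousWithinAt_id).prodMk hγw
  have hev1 : ∀ᶠ α in nhdsWithin α₀ (Set.Icc 0 1), (γ α, α) ∈ W :=
    hΦ.preimage_mem_nhdsWithin (hWo.mem_nhds hWmem)
  have hev2 : ∀ᶠ α in nhdsWithin α₀ (Set.Icc 0 1), (α, γ α) ∈ Ψ.source :=
    hΦ'.preimage_mem_nhdsWithin (Ψ.open_source.mem_nhds hΨsource)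
  have hEcont : ContinuousWithinAt (fun α => Ecal (α, γ α)) (Set.Icc 0 1) α₀ := by
    exact ContinuousAt.comp_continuousWithinAt (g := Ecal)
      (f := fun α => ((α, γ α) : ℝ × ℂ)) ((hEanal _ hptU).continuousAt) hΦ'
  have hev3 : ∀ᶠ α in nhdsWithin α₀ (Set.Icc 0 1), Ecal (α, γ α) ≠ 0 :=
    hEcont.preimage_mem_nhdsWithin (isOpen_compl_singleton.mem_nhds hE0)
  have hev4 : ∀ᶠ α in nhdsWithin α₀ (Set.Icc 0 1), α ∈ U' :=
    eventually_nhdsWithin_of_eventually_nhds (hU'open.eventually_mem (hIccU' hα₀))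
  have hevall := (hev1.and hev2).and (hev3.and hev4)
  obtain ⟨V, hVopen, hVα₀, hVsub⟩ := mem_nhdsWithin.mp hevall
  refine ⟨V, hVopen, hVα₀, ?_⟩
  -- key identity on V ∩ Icc
  have key : ∀ α ∈ V ∩ Set.Icc 0 1, G (α, γ α) = (α, 0) := by
    intro α hα
    obtain ⟨⟨h1, _⟩, _⟩ := hVsub ⟨hα.1, hα.2⟩
    have hregα : ((γ α, α) : ℂ × ℝ) ∈ eigenRegion n C := ⟨hα.2, hγroot α hα.2⟩
    have hmult : m ≤ (Matrix.charpoly (C α)).rootMultiplicity (γ α) :=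
      hWmult (γ α, α) ⟨hregα, h1⟩
    have hFz : F (α, γ α) = 0 := by
      rw [hFeq]
      have hlt : m - 1 < (Matrix.charpoly (C α)).rootMultiplicity (γ α) := by omega
      exact Polynomial.isRoot_iterate_derivative_of_lt_rootMultiplicity hlt
    simp [hGdef, hFz]
  have hΨmap : ∀ α ∈ V ∩ Set.Icc 0 1, Ψ (α, γ α) = (α, 0) := by
    intro α hα
    rw [hΨcoe]
    exact key α hα
  have htarget : ∀ α ∈ V ∩ Set.Icc 0 1, ((α, (0 : ℂ)) : ℝ × ℂ) ∈ Ψ.target := by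
    intro α hα
    rw [← hΨmap α hα]
    exact Ψ.map_source (hVsub ⟨hα.1, hα.2⟩).1.2
  have hsymm_eq : ∀ α ∈ V ∩ Set.Icc 0 1, Ψ.symm (α, 0) = (α, γ α) := by
    intro α hα
    rw [← hΨmap α hα]
    exact Ψ.left_inv (hVsub ⟨hα.1, hα.2⟩).1.2
  -- conclude
  intro α₁ hα₁
  have hα₁Icc : α₁ ∈ Set.Icc (0 : ℝ) 1 := hα₁.2
  have hpt₁U : ((α₁, γ α₁) : ℝ × ℂ) ∈ U' ×ˢ (univ : Set ℂ) := ⟨hIccU' hα₁Icc, mem_univ _⟩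
  have hE1 : Ecal (α₁, γ α₁) ≠ 0 := (hVsub ⟨hα₁.1, hα₁.2⟩).2.1
  obtain ⟨L₁, hL₁⟩ := exists_CLE_hasFDerivAt F (α₁, γ α₁)
    (hFanal _ hpt₁U).differentiableAt (hpart α₁ (γ α₁)) hE1
  have hsymmCD : ContDiffAt ℝ (⊤ : ℕ∞) Ψ.symm (α₁, (0 : ℂ)) := by
    apply Ψ.contDiffAt_symm (htarget α₁ hα₁)
    · rw [hsymm_eq α₁ hα₁, hΨcoe]
      exact hL₁
    · rw [hsymm_eq α₁ hα₁, hΨcoe]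
      exact hGcd _ hpt₁U
  have hδ : ContDiffAt ℝ (⊤ : ℕ∞) (fun α => (Ψ.symm (α, (0 : ℂ))).2) α₁ := by
    have h1 : ContDiffAt ℝ (⊤ : ℕ∞) (fun α : ℝ => ((α, (0 : ℂ)) : ℝ × ℂ)) α₁ :=
      contDiffAt_id.prodMk contDiffAt_const
    have h2 : ContDiffAt ℝ (⊤ : ℕ∞) (fun q : ℝ × ℂ => (Ψ.symm q).2) (α₁, (0 : ℂ)) :=
      contDiffAt_snd.comp _ hsymmCD
    exact ContDiffAt.comp (g := fun q : ℝ × ℂ => (Ψ.symm q).2)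
      (f := fun α : ℝ => ((α, (0 : ℂ)) : ℝ × ℂ)) α₁ h2 h1
  apply (hδ.contDiffWithinAt).congr
  · intro y hy
    rw [hsymm_eq y hy]
  · rw [hsymm_eq α₁ hα₁]
end

section
/- Let n ≥ 1 and let C : [0,1] → M_n(ℂ) be a matrix path such that each entry function α ↦ (C_α)_{ij} is real-analytic on an open neighborhood of [0,1] in ℝ. Then the set of singular ambiguities of the C-eigenregion E_C is finite. -/
open Polynomial Set

/-!
Let `k` be the largest number of distinct eigenvalues of `C α` over `α ∈ [0, 1]`. The `k × k`
Hankel matrix of power sums of the eigenvalues, `(∑ λ ^ (a + b))_{a b}`, factors as `Vᵀ D V` with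
`V` a Vandermonde matrix in the distinct eigenvalues and `D` the diagonal of their multiplicities,
so its determinant vanishes exactly when there are fewer than `k` distinct eigenvalues. Power sums
of the roots are polynomials in the coefficients of the characteristic polynomial, so this
determinant is real-analytic in `α`; it does not vanish where `k` is attained, hence it has only
finitely many zeros in `[0, 1]`.

Away from these zeros multiplicities cannot drop. Take points of the eigenregion converging to
`(λ₀, α₀)`, list the eigenvalues of each as a tuple, and pass to a convergent subsequence of tuples;
the limit tuple lists the eigenvalues of `C α₀`. Coordinates that differ in the limit differ nearby,
so the number of distinct coordinates can only go up; as it is already maximal at `α₀`, the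
coordinates agree nearby exactly where they agree in the limit, and multiplicities are preserved.
-/

open Filter Topology Matrix

theorem Function.FactorsThrough.symm_of_card_image_le {ι β γ : Type*} [Fintype ι]
    [DecidableEq β] [DecidableEq γ] {f : ι → β} {g : ι → γ} (hgf : g.FactorsThrough f)
    (hcard : (Finset.univ.image f).card ≤ (Finset.univ.image g).card) : f.FactorsThrough g := by
  intro a b hab
  set φ := Function.extend f g fun _ => g a
  have hφ : ∀ i, φ (f i) = g i := hgf.extend_apply _
  have himage : (Finset.univ.image f).image φ = Finset.univ.image g := by
    rw [Finset.image_image]; exact Finset.image_congr fun i _ => hφ i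
  have hinj : Set.InjOn φ (Finset.univ.image f) :=
    Finset.card_image_iff.mp (le_antisymm Finset.card_image_le (himage ▸ hcard))
  exact hinj (Finset.mem_image_of_mem f (Finset.mem_univ a))
    (Finset.mem_image_of_mem f (Finset.mem_univ b)) (by rw [hφ, hφ, hab])

theorem Filter.Tendsto.eventually_factorsThrough {γ ι X : Type*} [Finite ι] [TopologicalSpace X]
    [T2Space X] {l : Filter γ} {r : γ → ι → X} {r₀ : ι → X} (hr : Tendsto r l (𝓝 r₀)) :
    ∀ᶠ c in l, r₀.FactorsThrough (r c) := by
  simp only [Function.FactorsThrough, eventually_all]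
  intro a b
  by_cases hab : r₀ a = r₀ b
  · exact Eventually.of_forall fun _ _ => hab
  · have hpair := (tendsto_pi_nhds.mp hr a).prodMk_nhds (tendsto_pi_nhds.mp hr b)
    filter_upwards [hpair.eventually (isOpen_ne_fun continuous_fst continuous_snd |>.mem_nhds hab)]
      with c hc h using absurd h hc

theorem Filter.Tendsto.eventually_count_map_eq {γ ι X : Type*} [Fintype ι] [TopologicalSpace X]
    [T2Space X] [DecidableEq X] {l : Filter γ} {r : γ → ι → X} {r₀ : ι → X} {z : γ → X} {z₀ : X}
    (hr : Tendsto r l (𝓝 r₀)) (hz : Tendsto z l (𝓝 z₀)) (hz₀ : z₀ ∈ range r₀)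
    (hzr : ∀ᶠ c in l, z c ∈ range (r c))
    (hcard : ∀ᶠ c in l, (Finset.univ.image (r c)).card ≤ (Finset.univ.image r₀).card) :
    ∀ᶠ c in l, (Finset.univ.val.map (r c)).count (z c) = (Finset.univ.val.map r₀).count z₀ := by
  have himage : ∀ {w : X} {ρ : ι → X}, w ∈ range ρ →
      Finset.univ.image (Option.elim' w ρ) = Finset.univ.image ρ := by
    rintro w ρ ⟨i, rfl⟩
    ext x
    simp only [Finset.mem_image, Finset.mem_univ, true_and, Option.exists, Option.elim'_none,
      Option.elim'_some]
    exact ⟨fun h => h.elim (fun h => ⟨i, h⟩) id, Or.inr⟩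
  -- adjoin `z` to the tuple `r` as the coordinate `none`
  have he : Tendsto (fun c => Option.elim' (z c) (r c)) l (𝓝 (Option.elim' z₀ r₀)) :=
    tendsto_pi_nhds.mpr fun o => o.rec hz (tendsto_pi_nhds.mp hr)
  filter_upwards [he.eventually_factorsThrough, hzr, hcard] with c hfac hzc hc
  have hfac' := hfac.symm_of_card_image_le (by rwa [himage hz₀, himage hzc])
  rw [Multiset.count_map, Multiset.count_map]
  exact congrArg _ (Multiset.filter_congr fun i _ => ⟨@hfac none (some i), @hfac' none (some i)⟩)

theorem Set.Nonempty.exists_isMaxOn_of_bddAbove {α : Type*} {s : Set α} (hs : s.Nonempty)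
    {f : α → ℕ} (hf : BddAbove (f '' s)) : ∃ a ∈ s, IsMaxOn f s a := by
  obtain ⟨_, ⟨a, ha, rfl⟩, hmax⟩ := exists_max_image _ id hf.finite (hs.image f)
  exact ⟨a, ha, fun b hb => hmax _ (mem_image_of_mem f hb)⟩

theorem Multiset.exists_eq_map_univ {α : Type*} {n : ℕ} {s : Multiset α} (hs : s.card = n) :
    ∃ r : Fin n → α, s = Finset.univ.val.map r := by
  have hlen : s.toList.length = n := by rw [Multiset.length_toList, hs]
  refine ⟨fun i => s.toList.get (i.cast hlen.symm), ?_⟩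
  rw [Fin.univ_val_map, ← List.ofFn_congr hlen, List.ofFn_get, Multiset.coe_toList]

theorem Polynomial.Monic.norm_le_of_isRoot {K : Type*} [NormedField K] {p : K[X]} (hp : p.Monic)
    {z : K} (hz : p.IsRoot z) : ‖z‖ ≤ 1 + ∑ i ∈ Finset.range p.natDegree, ‖p.coeff i‖ := by
  have h := (hz.norm_lt_cauchyBound hp.ne_zero).le
  have hsup : (Finset.range p.natDegree).sup (fun i => ‖p.coeff i‖₊) ≤
      ∑ i ∈ Finset.range p.natDegree, ‖p.coeff i‖₊ :=
    Finset.sup_le fun i hi =>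
      Finset.single_le_sum (f := fun i => ‖p.coeff i‖₊) (fun _ _ => zero_le) hi
  rw [cauchyBound, hp.leadingCoeff, nnnorm_one, div_one] at h
  have := h.trans (add_le_add_left hsup 1)
  rw [add_comm, ← NNReal.coe_le_coe] at this
  push_cast at this
  exact this

theorem Polynomial.tendsto_eval_of_tendsto_coeff {γ K : Type*} [NormedField K] {l : Filter γ}
    {P : γ → K[X]} {P₀ : K[X]} {n : ℕ} (hdeg : ∀ c, (P c).natDegree ≤ n) (hdeg₀ : P₀.natDegree ≤ n)
    (hP : ∀ i, Tendsto (fun c => (P c).coeff i) l (𝓝 (P₀.coeff i))) (x : K) :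
    Tendsto (fun c => (P c).eval x) l (𝓝 (P₀.eval x)) := by
  simp only [eval_eq_sum_range' (Nat.lt_succ_of_le (hdeg _)),
    eval_eq_sum_range' (Nat.lt_succ_of_le hdeg₀)]
  exact tendsto_finsetSum _ fun i _ => (hP i).mul_const _

theorem Polynomial.exists_norm_le_of_isRoot_of_tendsto_coeff {K : Type*} [NormedField K]
    {P : ℕ → K[X]} {P₀ : K[X]} {n : ℕ} (hmonic : ∀ j, (P j).Monic) (hdeg : ∀ j, (P j).natDegree = n)
    (hP : ∀ i, Tendsto (fun j => (P j).coeff i) atTop (𝓝 (P₀.coeff i))) :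
    ∃ B, 0 ≤ B ∧ ∀ j z, (P j).IsRoot z → ‖z‖ ≤ B := by
  obtain ⟨S, hS⟩ := (tendsto_finsetSum (Finset.range n) fun i _ => (hP i).norm).bddAbove_range
  have hS' : ∀ j, ∑ i ∈ Finset.range n, ‖(P j).coeff i‖ ≤ S := fun j => hS ⟨j, rfl⟩
  refine ⟨1 + S, ?_, fun j z hz => ?_⟩
  · linarith [hS' 0,
      Finset.sum_nonneg fun i (_ : i ∈ Finset.range n) => norm_nonneg ((P 0).coeff i)]
  · have := (hmonic j).norm_le_of_isRoot hz
    rw [hdeg j] at this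
    linarith [hS' j]

theorem Polynomial.eq_prod_X_sub_C_of_tendsto {γ K : Type*} [NontriviallyNormedField K]
    {l : Filter γ} [l.NeBot]
    {n : ℕ} {P : γ → K[X]} {P₀ : K[X]} {r : γ → Fin n → K} {r₀ : Fin n → K}
    (hPr : ∀ c, P c = ((Finset.univ.val.map (r c)).map (X - C ·)).prod) (hr : Tendsto r l (𝓝 r₀))
    (hdeg₀ : P₀.natDegree ≤ n) (hP : ∀ i, Tendsto (fun c => (P c).coeff i) l (𝓝 (P₀.coeff i))) :
    P₀ = ((Finset.univ.val.map r₀).map (X - C ·)).prod := by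
  have heval : ∀ (ρ : Fin n → K) (x : K),
      ((Finset.univ.val.map ρ).map (X - C ·)).prod.eval x = ∏ i, (x - ρ i) := fun ρ x => by
    simp only [eval_multiset_prod, Multiset.map_map, Finset.prod_eq_multiset_prod,
      Function.comp_def, eval_sub, eval_X, eval_C]
  have hdeg : ∀ c, (P c).natDegree ≤ n := fun c => by
    rw [hPr, natDegree_multiset_prod_X_sub_C_eq_card]
    simp
  refine Polynomial.funext fun x =>
    tendsto_nhds_unique (tendsto_eval_of_tendsto_coeff hdeg hdeg₀ hP x) ?_
  simp only [hPr, heval]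
  exact tendsto_finsetProd _ fun i _ => tendsto_const_nhds.sub (tendsto_pi_nhds.mp hr i)

theorem Polynomial.frequently_rootMultiplicity_eq_of_tendsto_coeff {K : Type*}
    [NontriviallyNormedField K] [IsAlgClosed K] [ProperSpace K] [DecidableEq K] {n : ℕ}
    {P : ℕ → K[X]} {P₀ : K[X]} (hmonic : ∀ j, (P j).Monic) (hdeg : ∀ j, (P j).natDegree = n)
    (hdeg₀ : P₀.natDegree ≤ n) (hP : ∀ i, Tendsto (fun j => (P j).coeff i) atTop (𝓝 (P₀.coeff i)))
    {z : ℕ → K} {z₀ : K} (hz : Tendsto z atTop (𝓝 z₀)) (hzP : ∀ j, (P j).IsRoot (z j))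
    (hz₀ : P₀.IsRoot z₀)
    (hcard : ∀ᶠ j in atTop, (P j).roots.toFinset.card ≤ P₀.roots.toFinset.card) :
    ∃ᶠ j in atTop, (P j).rootMultiplicity (z j) = P₀.rootMultiplicity z₀ := by
  choose r hr using fun j =>
    Multiset.exists_eq_map_univ (IsAlgClosed.card_roots_eq_natDegree.trans (hdeg j))
  have hrange : ∀ {p : K[X]} {ρ : Fin n → K} {w : K}, p ≠ 0 → p.roots = Finset.univ.val.map ρ →
      p.IsRoot w → w ∈ range ρ := fun hp hρ hw => by
    obtain ⟨i, -, hi⟩ := Multiset.mem_map.mp (hρ ▸ (mem_roots hp).mpr hw)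
    exact ⟨i, hi⟩
  obtain ⟨B, hB, hBroots⟩ := exists_norm_le_of_isRoot_of_tendsto_coeff hmonic hdeg hP
  obtain ⟨r₀, -, φ, hφ, hr₀⟩ := tendsto_subseq_of_bounded (Metric.isBounded_closedBall (x := 0))
    fun j => mem_closedBall_zero_iff.mpr <| (pi_norm_le_iff_of_nonneg hB).mpr fun i =>
      hBroots j _ (isRoot_of_mem_roots (hr j ▸ Multiset.mem_map_of_mem _ (Finset.mem_univ_val i)))
  have hP₀ : P₀ = ((Finset.univ.val.map r₀).map (X - C ·)).prod :=
    eq_prod_X_sub_C_of_tendsto (P := P ∘ φ) (fun l => by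
      simp only [Function.comp_apply]
      rw [← hr]
      exact (IsAlgClosed.splits _).eq_prod_roots_of_monic (hmonic _))
      hr₀ hdeg₀ fun i => (hP i).comp hφ.tendsto_atTop
  have hroots₀ : P₀.roots = Finset.univ.val.map r₀ := by
    rw [hP₀, roots_multiset_prod_X_sub_C]
  have hne₀ : P₀ ≠ 0 := by
    rw [hP₀]; exact (monic_multiset_prod_of_monic _ _ fun a _ => monic_X_sub_C a).ne_zero
  have hcount := hr₀.eventually_count_map_eq (hz.comp hφ.tendsto_atTop) (hrange hne₀ hroots₀ hz₀)
    (Eventually.of_forall fun l => hrange (hmonic _).ne_zero (hr _) (hzP _))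
    ((hφ.tendsto_atTop.eventually hcard).mono fun l hl => by rwa [hr, hroots₀] at hl)
  refine hφ.tendsto_atTop.frequently (Eventually.frequently ?_)
  filter_upwards [hcount] with l hl
  rwa [← count_roots, ← count_roots, hr, hroots₀]

section PowerSumHankel

variable {K : Type*} [Field K] [DecidableEq K]

def powerSumHankel (k : ℕ) (s : Multiset K) : Matrix (Fin k) (Fin k) K :=
  Matrix.of fun a b => (s.map (· ^ (a + b : ℕ))).sum

theorem exists_powerSumHankel_eq (k : ℕ) (s : Multiset K) :
    ∃ μ : Fin s.toFinset.card → K, Function.Injective μ ∧ (∀ i, μ i ∈ s) ∧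
      powerSumHankel k s = (Matrix.of fun i (b : Fin k) => μ i ^ (b : ℕ))ᵀ *
        diagonal (fun i => (s.count (μ i) : K)) * Matrix.of fun i (b : Fin k) => μ i ^ (b : ℕ) := by
  set e := s.toFinset.equivFin.symm
  refine ⟨fun i => e i, Subtype.val_injective.comp e.injective,
    fun i => Multiset.mem_toFinset.mp (e i).2, ?_⟩
  ext a b
  simp only [powerSumHankel, of_apply, mul_apply, transpose_apply, diagonal_apply, mul_ite,
    mul_zero, Finset.sum_ite_eq', Finset.mem_univ, if_true]
  rw [Finset.sum_multiset_map_count, ← Finset.sum_coe_sort, ← e.sum_comp]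
  refine Finset.sum_congr rfl fun i _ => ?_
  rw [nsmul_eq_mul, pow_add]; ring

theorem det_powerSumHankel_eq_zero {k : ℕ} {s : Multiset K} (hs : s.toFinset.card < k) :
    (powerSumHankel k s).det = 0 := by
  obtain ⟨μ, -, -, hμ⟩ := exists_powerSumHankel_eq k s
  by_contra hdet
  have hrank := rank_of_isUnit _ ((isUnit_iff_isUnit_det _).mpr (Ne.isUnit hdet))
  rw [hμ, Fintype.card_fin, Matrix.mul_assoc] at hrank
  have := hrank ▸ (rank_mul_le_left _ _).trans
    (rank_le_width (of fun i (b : Fin k) => μ i ^ (b : ℕ))ᵀ)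
  omega

theorem det_powerSumHankel_ne_zero [CharZero K] {k : ℕ} {s : Multiset K}
    (hs : s.toFinset.card = k) :
    (powerSumHankel k s).det ≠ 0 := by
  subst hs
  obtain ⟨μ, hinj, hmem, hμ⟩ := exists_powerSumHankel_eq s.toFinset.card s
  rw [hμ, det_mul, det_mul, det_transpose, det_diagonal]
  have hV : (Matrix.of fun i (b : Fin s.toFinset.card) => μ i ^ (b : ℕ)).det ≠ 0 :=
    det_vandermonde_ne_zero_iff.mpr hinj
  refine mul_ne_zero (mul_ne_zero hV (Finset.prod_ne_zero_iff.mpr fun i _ => ?_)) hV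
  exact Nat.cast_ne_zero.mpr (Multiset.count_ne_zero.mpr (hmem i))

end PowerSumHankel

open MvPolynomial in
theorem MvPolynomial.IsSymmetric.exists_aeval_eq_aeval_coeff {R : Type*} [CommRing R] [IsDomain R]
    {n : ℕ} {F : MvPolynomial (Fin n) R} (hF : F.IsSymmetric) :
    ∃ G : MvPolynomial (Fin n) R, ∀ (p : R[X]) (r : Fin n → R), p.Monic → p.natDegree = n →
      p.roots = Finset.univ.val.map r → aeval r F = aeval (fun i : Fin n => p.coeff i) G := by
  obtain ⟨G, hG⟩ := esymmAlgHom_surjective R (σ := Fin n) (n := n) (by simp) ⟨F, hF⟩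
  have hFG : bind₁ (fun i : Fin n => esymm (Fin n) R (i + 1)) G = F := by
    rw [← aeval_eq_bind₁, ← esymmAlgHom_apply, hG]
  -- Vieta: the `(i + 1)`-st elementary symmetric function of the roots is
  -- `(-1) ^ (i + 1) * p.coeff (n - 1 - i)`.
  refine ⟨bind₁ (fun i : Fin n => MvPolynomial.C ((-1) ^ (i + 1 : ℕ)) * X i.rev) G,
    fun p r hp hdeg hr => ?_⟩
  rw [← hFG, aeval_bind₁, aeval_bind₁]
  congr 2 with i
  have hvieta := coeff_eq_esymm_roots_of_card (by rw [hr, hdeg]; simp)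
    (k := i.rev) (by rw [hdeg]; exact i.rev.2.le)
  have hi : p.natDegree - i.rev = i + 1 := by rw [hdeg, Fin.val_rev]; omega
  rw [hi, hp.leadingCoeff, one_mul] at hvieta
  rw [map_mul, aeval_C, aeval_X, hvieta, aeval_esymm_eq_multiset_esymm, ← hr,
    Algebra.algebraMap_self, RingHom.id_apply, ← mul_assoc, ← mul_pow, neg_one_mul, neg_neg,
    one_pow, one_mul]

section Analytic

variable {𝕜 E B : Type*} [NontriviallyNormedField 𝕜] [NormedAddCommGroup E] [NormedSpace 𝕜 E]
  [NormedCommRing B] [NormedAlgebra 𝕜 B] {ι : Type*} [Fintype ι] [DecidableEq ι]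
  {M : E → Matrix ι ι B} {s : Set E}

theorem analyticOnNhd_charpoly_coeff_s14 (hM : ∀ i j, AnalyticOnNhd 𝕜 (fun x => M x i j) s) (k : ℕ) :
    AnalyticOnNhd 𝕜 (fun x => (M x).charpoly.coeff k) s := by
  have h := AnalyticOnNhd.aeval_mvPolynomial (f := fun x (ij : ι × ι) => M x ij.1 ij.2)
    (fun ij => hM ij.1 ij.2) ((Matrix.charpoly.univ B ι).coeff k)
  convert h using 2 with x
  rw [MvPolynomial.aeval_eq_eval₂Hom, Algebra.algebraMap_self, Matrix.charpoly.univ_coeff_eval₂Hom]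
  rfl

theorem analyticOnNhd_det_s14 (hM : ∀ i j, AnalyticOnNhd 𝕜 (fun x => M x i j) s) :
    AnalyticOnNhd 𝕜 (fun x => (M x).det) s := by
  simp_rw [Matrix.det_eq_sign_charpoly_coeff]
  exact analyticOnNhd_const.mul (analyticOnNhd_charpoly_coeff_s14 hM 0)

end Analytic

theorem analyticOnNhd_sum_roots_charpoly_pow {𝕜 E K : Type*} [NontriviallyNormedField 𝕜]
    [NormedAddCommGroup E] [NormedSpace 𝕜 E] [NormedField K] [IsAlgClosed K] [NormedAlgebra 𝕜 K]
    {n : ℕ} {M : E → Matrix (Fin n) (Fin n) K} {s : Set E}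
    (hM : ∀ i j, AnalyticOnNhd 𝕜 (fun x => M x i j) s) (j : ℕ) :
    AnalyticOnNhd 𝕜 (fun x => ((M x).charpoly.roots.map (· ^ j)).sum) s := by
  obtain ⟨G, hG⟩ := (MvPolynomial.psum_isSymmetric (Fin n) K j).exists_aeval_eq_aeval_coeff
  have hsum : ∀ x, ((M x).charpoly.roots.map (· ^ j)).sum =
      MvPolynomial.aeval (fun i : Fin n => (M x).charpoly.coeff i) G := fun x => by
    have hdeg : (M x).charpoly.natDegree = n := by simp [Matrix.charpoly_natDegree_eq_dim]
    obtain ⟨r, hr⟩ :=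
      Multiset.exists_eq_map_univ (IsAlgClosed.card_roots_eq_natDegree.trans hdeg)
    rw [← hG _ r (Matrix.charpoly_monic _) hdeg hr, hr, MvPolynomial.psum, map_sum]
    simp only [Multiset.map_map, Finset.sum_eq_multiset_sum, map_pow, MvPolynomial.aeval_X]
    rfl
  simp_rw [hsum]
  exact AnalyticOnNhd.aeval_mvPolynomial (f := fun x (i : Fin n) => (M x).charpoly.coeff i)
    (fun i => analyticOnNhd_charpoly_coeff_s14 hM i) G

theorem AnalyticOnNhd.finite_zeros {𝕜 E : Type*} [NontriviallyNormedField 𝕜] [NormedAddCommGroup E]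
    [NormedSpace 𝕜 E] {f : 𝕜 → E} {s : Set 𝕜} (hf : AnalyticOnNhd 𝕜 f s) (hs : IsCompact s)
    (hs' : IsPreconnected s) {x₀ : 𝕜} (hx₀ : x₀ ∈ s) (hfx₀ : f x₀ ≠ 0) :
    {x ∈ s | f x = 0}.Finite := by
  rcases hf.eqOn_zero_or_eventually_ne_zero_of_preconnected hs' with h | h
  · exact absurd (h hx₀) hfx₀
  · exact (hs.finite_sdiff_of_mem_codiscreteWithin h).subset fun x hx => ⟨hx.1, fun h' => h' hx.2⟩

theorem IsSingularAmbiguity.frequently_card_roots_gt {n : ℕ} {C : ℝ → Matrix (Fin n) (Fin n) ℂ}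
    {z₀ : ℂ} {α₀ : ℝ} (hsing : IsSingularAmbiguity n C (z₀, α₀))
    (hC : ∀ i, ContinuousAt (fun α => (C α).charpoly.coeff i) α₀) :
    ∃ᶠ α in 𝓝[Icc 0 1] α₀,
      (C α₀).charpoly.roots.toFinset.card < (C α).charpoly.roots.toFinset.card := by
  obtain ⟨⟨-, hroot⟩, -, hnear⟩ := hsing
  have hcl : (z₀, α₀) ∈
      closure {q | q ∈ eigenRegion n C ∧ eigMult n C q < eigMult n C (z₀, α₀)} :=
    mem_closure_iff.mpr fun U hU hmem => by
      obtain ⟨q, ⟨hqE, hqU⟩, hq⟩ := hnear U hU hmem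
      exact ⟨q, hqU, hqE, hq⟩
  obtain ⟨q, hq, hlim⟩ := mem_closure_iff_seq_limit.mp hcl
  have hα : Tendsto (fun j => (q j).2) atTop (𝓝[Icc 0 1] α₀) :=
    tendsto_nhdsWithin_iff.mpr ⟨hlim.snd_nhds, Eventually.of_forall fun j => (hq j).1.1⟩
  have hdeg : ∀ α, (C α).charpoly.natDegree = n := fun α => by
    simp [Matrix.charpoly_natDegree_eq_dim]
  by_contra hfreq
  rw [not_frequently] at hfreq
  obtain ⟨j, hj⟩ := (frequently_rootMultiplicity_eq_of_tendsto_coeff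
    (fun j => Matrix.charpoly_monic _) (fun j => hdeg _) (hdeg α₀).le
    (fun i => (hC i).tendsto.comp (tendsto_nhdsWithin_iff.mp hα).1) hlim.fst_nhds
    (fun j => (hq j).1.2) hroot ((hα.eventually hfreq).mono fun j => le_of_not_gt)).exists
  exact (hq j).2.ne hj

theorem finitely_many_singular_ambiguities_of_analytic_general
    (n : ℕ)
    (C : ℝ → Matrix (Fin n) (Fin n) ℂ)
    (hC : ∃ U : Set ℝ, IsOpen U ∧ Set.Icc (0 : ℝ) 1 ⊆ U ∧
      ∀ i j, AnalyticOnNhd ℝ (fun α => C α i j) U) :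
    {p : ℂ × ℝ | IsSingularAmbiguity n C p}.Finite := by
  obtain ⟨U, -, hIU, hCU⟩ := hC
  have hA : ∀ i j, AnalyticOnNhd ℝ (fun α => C α i j) (Icc 0 1) := fun i j => (hCU i j).mono hIU
  set N : ℝ → ℕ := fun α => (C α).charpoly.roots.toFinset.card
  obtain ⟨α₁, hα₁, hmax⟩ := (nonempty_Icc.mpr zero_le_one).exists_isMaxOn_of_bddAbove
    (f := N) ⟨n, by
      rintro _ ⟨α, -, rfl⟩
      simpa [Matrix.charpoly_natDegree_eq_dim] using
        (Multiset.toFinset_card_le _).trans (card_roots' (C α).charpoly)⟩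
  have hzeros : {α ∈ Icc 0 1 | (powerSumHankel (N α₁) (C α).charpoly.roots).det = 0}.Finite :=
    (analyticOnNhd_det_s14 fun a b => analyticOnNhd_sum_roots_charpoly_pow hA _).finite_zeros
      isCompact_Icc isPreconnected_Icc hα₁ (det_powerSumHankel_ne_zero rfl)
  refine (hzeros.biUnion fun α _ =>
    (C α).charpoly.roots.toFinset.finite_toSet.prod (finite_singleton α)).subset ?_
  rintro ⟨z, α⟩ hsing
  have hlt : N α < N α₁ := by
    by_contra hge
    obtain ⟨α', hgt, hα'⟩ := ((hsing.frequently_card_roots_gt fun i =>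
      (analyticOnNhd_charpoly_coeff_s14 hA i α hsing.1.1).continuousAt).and_eventually
      self_mem_nhdsWithin).exists
    exact hge (hgt.trans_le (hmax hα'))
  simp only [mem_iUnion]
  exact ⟨α, ⟨hsing.1.1, det_powerSumHankel_eq_zero hlt⟩,
    by simpa using (mem_roots (Matrix.charpoly_monic _).ne_zero).mpr hsing.1.2, rfl⟩

theorem finitely_many_singular_ambiguities_of_analytic
    (n : ℕ) (hn : 1 ≤ n)
    (C : ℝ → Matrix (Fin n) (Fin n) ℂ)
    (hC : ∃ U : Set ℝ, IsOpen U ∧ Set.Icc (0 : ℝ) 1 ⊆ U ∧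
      ∀ i j, AnalyticOnNhd ℝ (fun α => C α i j) U) :
    {p : ℂ × ℝ | IsSingularAmbiguity n C p}.Finite :=
  finitely_many_singular_ambiguities_of_analytic_general n C hC
end

section
/- Let n ≥ 2, let D ∈ M_n(ℂ) be a diagonal matrix with distinct diagonal entries λ_1, ..., λ_n, and let i ≠ j. Then there exists a matrix path C with C_0 = C_1 = D such that C_α has n distinct eigenvalues for every α ∈ [0,1], ‖C_α − D‖ < |λ_i − λ_j| for all α ∈ [0,1], and there is a C-eigenpath set {γ_1, ..., γ_n} with γ_k(0) = λ_k for all k, γ_i(1) = λ_j, γ_j(1) = λ_i, and γ_k(1) = λ_k for all k ≠ i, j. -/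
/-!
Write `a, b` for `λ_i, λ_j`. In the `(i, j)`-plane, `C_t` is the conjugate of
`diag((a + b)/2 + (a - b)/2 · f(t), (a + b)/2 - (a - b)/2 · f(t))` by the rotation through
`π t / 2`, where `f(t) = cos π t + i c sin π t` runs along the upper half of an ellipse from `1`
to `-1`; all other diagonal entries stay fixed. The two eigenvalues therefore trade places without
colliding, and for `c ≤ 1` every entry of `C_t - D` has modulus at most `|a - b| / 2`. The upper
half-ellipses for different `c` meet only at `±1`, so all but finitely many `c ∈ (0, 1]` keep the
moving eigenvalues away from the fixed ones.
-/

open Polynomial Set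

open Real Matrix

noncomputable def ellipse (c t : ℝ) : ℂ := cos (π * t) + c * sin (π * t) * Complex.I

section ellipse

variable {c t : ℝ}

@[simp] lemma ellipse_re : (ellipse c t).re = cos (π * t) := by
  simp [ellipse, -Complex.ofReal_cos, -Complex.ofReal_sin]

@[simp] lemma ellipse_im : (ellipse c t).im = c * sin (π * t) := by
  simp [ellipse, -Complex.ofReal_cos, -Complex.ofReal_sin]

lemma continuous_ellipse (c : ℝ) : Continuous (ellipse c) := by
  unfold ellipse; fun_prop

@[simp] lemma ellipse_zero : ellipse c 0 = 1 := by simp [ellipse]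

@[simp] lemma ellipse_one : ellipse c 1 = -1 := by simp [ellipse]

lemma ellipse_ne_zero (hc : c ≠ 0) : ellipse c t ≠ 0 := by
  intro h
  have hcos : cos (π * t) = 0 := by simpa using congrArg Complex.re h
  have hsin : sin (π * t) = 0 := by simpa [hc] using congrArg Complex.im h
  simpa [hcos, hsin] using sin_sq_add_cos_sq (π * t)

noncomputable def ellipseParameter (u : ℂ) : ℝ := u.im / √(1 - u.re ^ 2)

lemma ellipseParameter_ellipse (ht : t ∈ Icc 0 1) (h1 : ellipse c t ≠ 1) (h2 : ellipse c t ≠ -1) :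
    ellipseParameter (ellipse c t) = c := by
  have hsin : 0 < sin (π * t) := by
    refine (sin_nonneg_of_nonneg_of_le_pi (by nlinarith [ht.1, pi_pos])
      (by nlinarith [ht.2, pi_pos])).lt_of_ne' fun hs => ?_
    have hcos := sin_sq_add_cos_sq (π * t)
    rw [hs] at hcos
    rcases sq_eq_one_iff.mp (by linarith : cos (π * t) ^ 2 = 1) with h | h
    · exact h1 (Complex.ext (by simp [h]) (by simp [hs]))
    · exact h2 (Complex.ext (by simp [h]) (by simp [hs]))
  rw [ellipseParameter, ellipse_re, ellipse_im, ← sin_sq, Real.sqrt_sq hsin.le,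
    mul_div_cancel_right₀ _ hsin.ne']

lemma exists_ellipse_avoiding (S : Finset ℂ) (h1 : 1 ∉ S) (h2 : -1 ∉ S) :
    ∃ c ∈ Ioc (0 : ℝ) 1, ∀ t ∈ Icc (0 : ℝ) 1, ellipse c t ∉ S := by
  obtain ⟨c, hc, hcS⟩ := (Ioc_infinite (zero_lt_one' ℝ)).exists_notMem_finset
    (S.image ellipseParameter)
  refine ⟨c, hc, fun t ht hS => hcS (Finset.mem_image.mpr ⟨_, hS, ?_⟩)⟩
  exact ellipseParameter_ellipse ht (fun h => h1 (h ▸ hS)) (fun h => h2 (h ▸ hS))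

lemma norm_le_one_of_re_sq_add_im_sq_le {z : ℂ} (h : z.re ^ 2 + z.im ^ 2 ≤ 1) : ‖z‖ ≤ 1 := by
  rw [← sq_le_one_iff₀ (norm_nonneg z), Complex.sq_norm, Complex.normSq_apply]
  nlinarith

lemma norm_ellipse_mul_cos_sub_one_le (hc : |c| ≤ 1) :
    ‖ellipse c t * cos (π * t) - 1‖ ≤ 1 := by
  apply norm_le_one_of_re_sq_add_im_sq_le
  have hc2 : c ^ 2 ≤ 1 := by nlinarith [sq_abs c, abs_nonneg c]
  have := sin_sq_add_cos_sq (π * t)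
  simp only [Complex.sub_re, Complex.sub_im, Complex.mul_re, Complex.mul_im, ellipse_re, ellipse_im,
    Complex.ofReal_re, Complex.ofReal_im, Complex.one_re, Complex.one_im]
  nlinarith [mul_nonneg (sq_nonneg (sin (π * t) * cos (π * t))) (sub_nonneg.2 hc2)]

lemma norm_ellipse_mul_sin_le (hc : |c| ≤ 1) : ‖ellipse c t * sin (π * t)‖ ≤ 1 := by
  apply norm_le_one_of_re_sq_add_im_sq_le
  have hc2 : c ^ 2 ≤ 1 := by nlinarith [sq_abs c, abs_nonneg c]
  have := sin_sq_add_cos_sq (π * t)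
  simp only [Complex.mul_re, Complex.mul_im, ellipse_re, ellipse_im, Complex.ofReal_re,
    Complex.ofReal_im]
  nlinarith [mul_nonneg (sq_nonneg (sin (π * t) * sin (π * t))) (sub_nonneg.2 hc2)]

end ellipse

noncomputable def swapEigenpath (a b : ℂ) (c t : ℝ) : ℂ := (a + b) / 2 + (a - b) / 2 * ellipse c t

-- the conjugate of `diagonal ![swapEigenpath a b c t, swapEigenpath b a c t]` by the rotation
-- through `π t / 2`
noncomputable def swapBlock (a b : ℂ) (c t : ℝ) : Matrix (Fin 2) (Fin 2) ℂ :=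
  !![(a + b) / 2 + (a - b) / 2 * ellipse c t * cos (π * t), (a - b) / 2 * ellipse c t * sin (π * t);
     (a - b) / 2 * ellipse c t * sin (π * t), (a + b) / 2 - (a - b) / 2 * ellipse c t * cos (π * t)]

section swap

variable {a b : ℂ} {c t : ℝ}

@[simp] lemma swapEigenpath_zero : swapEigenpath a b c 0 = a := by
  simp [swapEigenpath]; ring

@[simp] lemma swapEigenpath_one : swapEigenpath a b c 1 = b := by
  simp [swapEigenpath]; ring

lemma continuous_swapEigenpath (a b : ℂ) (c : ℝ) : Continuous (swapEigenpath a b c) :=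
  continuous_const.add (continuous_const.mul (continuous_ellipse c))

lemma swapEigenpath_ne_swapEigenpath (hab : a ≠ b) (hc : c ≠ 0) :
    swapEigenpath a b c t ≠ swapEigenpath b a c t := by
  intro h
  apply mul_ne_zero (sub_ne_zero.mpr hab) (ellipse_ne_zero (t := t) hc)
  unfold swapEigenpath at h
  linear_combination h

lemma exists_swapEigenpath_avoiding (hab : a ≠ b) (T : Finset ℂ) (ha : a ∉ T) (hb : b ∉ T) :
    ∃ c ∈ Ioc (0 : ℝ) 1, ∀ t ∈ Icc (0 : ℝ) 1,
      swapEigenpath a b c t ∉ T ∧ swapEigenpath b a c t ∉ T := by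
  set φ : ℂ → ℂ := fun z => (2 * z - a - b) / (a - b)
  have hab' : a - b ≠ 0 := sub_ne_zero.mpr hab
  have hφ_eq_one {z : ℂ} (h : φ z = 1) : z = a := by
    rw [div_eq_one_iff_eq hab'] at h; linear_combination h / 2
  have hφ_eq_neg_one {z : ℂ} (h : φ z = -1) : z = b := by
    rw [div_eq_iff hab'] at h; linear_combination h / 2
  have hφ (c t : ℝ) : φ (swapEigenpath a b c t) = ellipse c t := by
    simp only [φ, swapEigenpath]; field_simp; ring
  have hφ' (c t : ℝ) : φ (swapEigenpath b a c t) = -ellipse c t := by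
    simp only [φ, swapEigenpath]; field_simp; ring
  obtain ⟨c, hc, havoid⟩ := exists_ellipse_avoiding (T.image φ ∪ T.image (-φ ·)) (by
    simp only [Finset.mem_union, Finset.mem_image, not_or, not_exists, not_and]
    exact ⟨fun z hz h => ha (hφ_eq_one h ▸ hz),
      fun z hz h => hb (hφ_eq_neg_one (neg_eq_iff_eq_neg.mp h) ▸ hz)⟩) (by
    simp only [Finset.mem_union, Finset.mem_image, not_or, not_exists, not_and]
    exact ⟨fun z hz h => hb (hφ_eq_neg_one h ▸ hz),
      fun z hz h => ha (hφ_eq_one (neg_inj.mp h) ▸ hz)⟩)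
  refine ⟨c, hc, fun t ht => ⟨fun h => havoid t ht ?_, fun h => havoid t ht ?_⟩⟩
  · exact Finset.mem_union_left _ (Finset.mem_image.mpr ⟨_, h, hφ c t⟩)
  · exact Finset.mem_union_right _ (Finset.mem_image.mpr ⟨_, h, by rw [hφ', neg_neg]⟩)

lemma charpoly_swapBlock :
    (swapBlock a b c t).charpoly =
      (X - C (swapEigenpath a b c t)) * (X - C (swapEigenpath b a c t)) := by
  have hcs : (cos (π * t) : ℂ) ^ 2 + (sin (π * t) : ℂ) ^ 2 = 1 := by
    exact_mod_cast cos_sq_add_sin_sq (π * t)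
  have htrace : (swapBlock a b c t).trace = swapEigenpath a b c t + swapEigenpath b a c t := by
    simp [swapBlock, swapEigenpath, trace_fin_two, -Complex.ofReal_cos]; ring
  have hdet : (swapBlock a b c t).det = swapEigenpath a b c t * swapEigenpath b a c t := by
    simp [swapBlock, swapEigenpath, det_fin_two, -Complex.ofReal_cos, -Complex.ofReal_sin]
    linear_combination (-((a - b) / 2 * ellipse c t) ^ 2) * hcs
  rw [charpoly_fin_two, htrace, hdet, C_add, C_mul]
  ring

@[simp] lemma swapBlock_zero : swapBlock a b c 0 = diagonal ![a, b] := by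
  ext k l; fin_cases k <;> fin_cases l <;> simp [swapBlock] <;> ring

@[simp] lemma swapBlock_one : swapBlock a b c 1 = diagonal ![a, b] := by
  ext k l; fin_cases k <;> fin_cases l <;> simp [swapBlock] <;> ring

lemma continuous_swapBlock (a b : ℂ) (c : ℝ) : Continuous (swapBlock a b c) := by
  have := continuous_ellipse c
  refine continuous_matrix fun k l => ?_
  fin_cases k <;> fin_cases l <;> simp [swapBlock] <;> fun_prop

lemma norm_swapBlock_sub_diagonal_le (hc : |c| ≤ 1) (k l : Fin 2) :
    ‖swapBlock a b c t k l - diagonal ![a, b] k l‖ ≤ ‖(a - b) / 2‖ := by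
  have h₁ := norm_ellipse_mul_cos_sub_one_le (t := t) hc
  have h₂ := norm_ellipse_mul_sin_le (t := t) hc
  have hscaled {w : ℂ} (hw : ‖w‖ ≤ 1) : ‖(a - b) / 2 * w‖ ≤ ‖(a - b) / 2‖ := by
    rw [norm_mul]; exact mul_le_of_le_one_right (norm_nonneg _) hw
  fin_cases k <;> fin_cases l
  · convert hscaled h₁ using 2
    simp [swapBlock, -Complex.ofReal_cos]; ring
  · convert hscaled h₂ using 2
    simp [swapBlock, -Complex.ofReal_sin]; ring
  · convert hscaled h₂ using 2
    simp [swapBlock, -Complex.ofReal_sin]; ring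
  · convert hscaled ((norm_neg _).trans_le h₁) using 2
    simp [swapBlock, -Complex.ofReal_cos]; ring

end swap

section Blocks

variable {ι m κ : Type*}

lemma norm_reindex_fromBlocks_sub_le {E : Type*} [SeminormedAddCommGroup E] (e : m ⊕ κ ≃ ι)
    {B B' : Matrix m m E} (D : Matrix κ κ E) {r : ℝ} (hr : 0 ≤ r) (h : ∀ p q, ‖B p q - B' p q‖ ≤ r)
    (k l : ι) :
    ‖(fromBlocks B 0 0 D).reindex e e k l - (fromBlocks B' 0 0 D).reindex e e k l‖ ≤ r := by
  simp only [reindex_apply, submatrix_apply]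
  rcases e.symm k with p | p <;> rcases e.symm l with q | q <;> simp [h, hr]

variable [DecidableEq ι] [DecidableEq m] [DecidableEq κ]

lemma diagonal_eq_reindex_fromBlocks {α : Type*} [Zero α] (e : m ⊕ κ ≃ ι) (d : ι → α) :
    diagonal d =
      (fromBlocks (diagonal (d ∘ e ∘ Sum.inl)) 0 0 (diagonal (d ∘ e ∘ Sum.inr))).reindex e e := by
  rw [fromBlocks_diagonal, reindex_apply, submatrix_diagonal_equiv]
  congr 1
  ext k
  obtain ⟨p | p, rfl⟩ := e.surjective k <;> simp

variable [Fintype ι] [Fintype m] [Fintype κ]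

lemma roots_charpoly_reindex_fromBlocks {K : Type*} [CommRing K] [IsDomain K] (e : m ⊕ κ ≃ ι)
    (B : Matrix m m K) (d : κ → K) :
    ((fromBlocks B 0 0 (diagonal d)).reindex e e).charpoly.roots =
      B.charpoly.roots + Finset.univ.val.map d := by
  rw [charpoly_reindex, charpoly_fromBlocks_zero₂₁, roots_mul (B.charpoly_monic.mul
    (charpoly_monic _)).ne_zero, charpoly_diagonal,
    roots_prod _ _ (monic_prod_of_monic _ _ fun k _ => monic_X_sub_C (d k)).ne_zero]
  simp [Multiset.bind_singleton]

end Blocks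

noncomputable def sumRangeComplEquiv {α β : Type*} (f : α → β) (hf : f.Injective)
    [DecidablePred (· ∈ Set.range f)] : α ⊕ ↥(Set.range f)ᶜ ≃ β :=
  (Equiv.sumCongr (Equiv.ofInjective f hf) (Equiv.refl _)).trans (Equiv.Set.sumCompl (Set.range f))

@[simp] lemma sumRangeComplEquiv_inl {α β : Type*} (f : α → β) (hf : f.Injective)
    [DecidablePred (· ∈ Set.range f)] (a : α) :
    sumRangeComplEquiv f hf (Sum.inl a) = f a := by
  simp [sumRangeComplEquiv]

section SwapPath

variable {ι κ : Type*} (e : Fin 2 ⊕ κ ≃ ι) (lam : ι → ℂ) (c : ℝ)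

noncomputable def swapPathEigenvalue (k : ι) (t : ℝ) : ℂ :=
  Sum.elim ![swapEigenpath (lam (e (.inl 0))) (lam (e (.inl 1))) c t,
    swapEigenpath (lam (e (.inl 1))) (lam (e (.inl 0))) c t] (lam ∘ e ∘ Sum.inr) (e.symm k)

lemma continuous_swapPathEigenvalue (k : ι) : Continuous (swapPathEigenvalue e lam c k) := by
  unfold swapPathEigenvalue
  rcases e.symm k with p | s
  · fin_cases p
    exacts [continuous_swapEigenpath _ _ c, continuous_swapEigenpath _ _ c]
  · exact continuous_const

@[simp] lemma swapPathEigenvalue_zero (k : ι) : swapPathEigenvalue e lam c k 0 = lam k := by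
  obtain ⟨p | s, rfl⟩ := e.surjective k
  · fin_cases p <;> simp [swapPathEigenvalue]
  · simp [swapPathEigenvalue]

lemma swapPathEigenvalue_inl_zero_one :
    swapPathEigenvalue e lam c (e (.inl 0)) 1 = lam (e (.inl 1)) := by
  simp [swapPathEigenvalue]

lemma swapPathEigenvalue_inl_one_one :
    swapPathEigenvalue e lam c (e (.inl 1)) 1 = lam (e (.inl 0)) := by
  simp [swapPathEigenvalue]

lemma swapPathEigenvalue_inr (s : κ) (t : ℝ) :
    swapPathEigenvalue e lam c (e (.inr s)) t = lam (e (.inr s)) := by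
  simp [swapPathEigenvalue]

lemma exists_injective_swapPathEigenvalue [Fintype κ] (hlam : Function.Injective lam) :
    ∃ c ∈ Ioc (0 : ℝ) 1, ∀ t ∈ Icc (0 : ℝ) 1,
      Function.Injective (swapPathEigenvalue e lam c · t) := by
  have hne {s : κ} {p : Fin 2} : lam (e (.inr s)) ≠ lam (e (.inl p)) :=
    hlam.ne (e.injective.ne Sum.inr_ne_inl)
  have hab : lam (e (.inl 0)) ≠ lam (e (.inl 1)) := hlam.ne (e.injective.ne (by simp))
  obtain ⟨c, hc, havoid⟩ := exists_swapEigenpath_avoiding hab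
    (Finset.univ.image (lam ∘ e ∘ Sum.inr)) (by simpa using fun s => hne)
    (by simpa using fun s => hne)
  refine ⟨c, hc, fun t ht => ?_⟩
  obtain ⟨hx, hy⟩ := havoid t ht
  simp only [Finset.mem_image, Finset.mem_univ, true_and, not_exists] at hx hy
  refine .comp (.sumElim ?_ (hlam.comp (e.injective.comp Sum.inr_injective)) ?_) e.symm.injective
  · exact injective_pair_iff_ne.mpr (swapEigenpath_ne_swapEigenpath hab hc.1.ne')
  · intro p s
    fin_cases p
    exacts [fun h => hx s h.symm, fun h => hy s h.symm]

variable [DecidableEq κ]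

noncomputable def swapPath (t : ℝ) : Matrix ι ι ℂ :=
  (fromBlocks (swapBlock (lam (e (.inl 0))) (lam (e (.inl 1))) c t) 0 0
    (diagonal (lam ∘ e ∘ Sum.inr))).reindex e e

lemma continuous_swapPath : Continuous (swapPath e lam c) :=
  ((continuous_swapBlock _ _ c).matrix_fromBlocks continuous_const continuous_const
    continuous_const).matrix_reindex e e

variable [DecidableEq ι]

lemma diagonal_eq_reindex_fromBlocks_pair :
    diagonal lam = (fromBlocks (diagonal ![lam (e (.inl 0)), lam (e (.inl 1))]) 0 0
      (diagonal (lam ∘ e ∘ Sum.inr))).reindex e e := by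
  rw [diagonal_eq_reindex_fromBlocks e lam]
  congr
  ext p; fin_cases p <;> rfl

lemma swapPath_zero : swapPath e lam c 0 = diagonal lam := by
  rw [swapPath, swapBlock_zero, ← diagonal_eq_reindex_fromBlocks_pair]

lemma swapPath_one : swapPath e lam c 1 = diagonal lam := by
  rw [swapPath, swapBlock_one, ← diagonal_eq_reindex_fromBlocks_pair]

lemma norm_swapPath_sub_diagonal_lt (hlam : lam (e (.inl 0)) ≠ lam (e (.inl 1))) {c : ℝ}
    (hc : |c| ≤ 1) (t : ℝ) (k l : ι) :
    ‖swapPath e lam c t k l - diagonal lam k l‖ < ‖lam (e (.inl 0)) - lam (e (.inl 1))‖ := by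
  rw [diagonal_eq_reindex_fromBlocks_pair e lam]
  refine (norm_reindex_fromBlocks_sub_le e _ (norm_nonneg _)
    (fun p q => norm_swapBlock_sub_diagonal_le hc p q) k l).trans_lt ?_
  rw [norm_div, Complex.norm_two]
  exact half_lt_self (norm_pos_iff.mpr (sub_ne_zero.mpr hlam))

variable [Fintype ι] [Fintype κ]

lemma roots_charpoly_swapPath (t : ℝ) :
    (swapPath e lam c t).charpoly.roots =
      Finset.univ.val.map (swapPathEigenvalue e lam c · t) := by
  rw [swapPath, roots_charpoly_reindex_fromBlocks, charpoly_swapBlock,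
    roots_mul (mul_ne_zero (X_sub_C_ne_zero _) (X_sub_C_ne_zero _)), roots_X_sub_C, roots_X_sub_C,
    show (swapPathEigenvalue e lam c · t) = _ ∘ e.symm from rfl, ← Multiset.map_map _ e.symm,
    Multiset.map_univ_val_equiv,
    ← Finset.univ_disjSum_univ, Finset.val_disjSum, Multiset.map_disjSum]
  rfl

end SwapPath

theorem diagonal_swap_path_general
    (n : ℕ) (lam : Fin n → ℂ) (hinj : Function.Injective lam)
    (i j : Fin n) (hij : i ≠ j) :
    ∃ C : ℝ → Matrix (Fin n) (Fin n) ℂ, ContinuousOn C (Set.Icc 0 1) ∧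
      C 0 = Matrix.diagonal lam ∧ C 1 = Matrix.diagonal lam ∧
      (∀ α ∈ Set.Icc (0 : ℝ) 1, (Matrix.charpoly (C α)).roots.toFinset.card = n) ∧
      (∀ α ∈ Set.Icc (0 : ℝ) 1, ∀ k l,
        ‖C α k l - Matrix.diagonal lam k l‖ < ‖lam i - lam j‖) ∧
      ∃ γ : Fin n → ℝ → ℂ, IsEigenpathSet n C γ ∧
        (∀ k, γ k 0 = lam k) ∧
        γ i 1 = lam j ∧ γ j 1 = lam i ∧
        ∀ k, k ≠ i → k ≠ j → γ k 1 = lam k := by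
  classical
  set e := sumRangeComplEquiv ![i, j] (injective_pair_iff_ne.mpr hij)
  have hi : e (.inl 0) = i := sumRangeComplEquiv_inl ..
  have hj : e (.inl 1) = j := sumRangeComplEquiv_inl ..
  obtain ⟨c, hc, hγ⟩ := exists_injective_swapPathEigenvalue e lam hinj
  refine ⟨swapPath e lam c, (continuous_swapPath e lam c).continuousOn, swapPath_zero e lam c,
    swapPath_one e lam c, fun t ht => ?_, fun t _ k l => ?_, swapPathEigenvalue e lam c,
    ⟨fun k => (continuous_swapPathEigenvalue e lam c k).continuousOn,
      fun t _ => (roots_charpoly_swapPath e lam c t).symm⟩,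
    swapPathEigenvalue_zero e lam c, ?_, ?_, fun k hki hkj => ?_⟩
  · rw [roots_charpoly_swapPath]
    exact (Finset.card_image_of_injective _ (hγ t ht)).trans (Finset.card_fin n)
  · simpa only [hi, hj] using norm_swapPath_sub_diagonal_lt e lam
      (hinj.ne (e.injective.ne (by simp))) (abs_le.mpr ⟨by linarith [hc.1], hc.2⟩) t k l
  · simpa only [hi, hj] using swapPathEigenvalue_inl_zero_one e lam c
  · simpa only [hi, hj] using swapPathEigenvalue_inl_one_one e lam c
  · obtain ⟨p | s, rfl⟩ := e.surjective k
    · fin_cases p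
      exacts [absurd hi hki, absurd hj hkj]
    · exact swapPathEigenvalue_inr e lam c s 1

theorem diagonal_swap_path
    (n : ℕ) (hn : 2 ≤ n) (lam : Fin n → ℂ) (hinj : Function.Injective lam)
    (i j : Fin n) (hij : i ≠ j) :
    ∃ C : ℝ → Matrix (Fin n) (Fin n) ℂ, ContinuousOn C (Set.Icc 0 1) ∧
      C 0 = Matrix.diagonal lam ∧ C 1 = Matrix.diagonal lam ∧
      (∀ α ∈ Set.Icc (0 : ℝ) 1, (Matrix.charpoly (C α)).roots.toFinset.card = n) ∧
      (∀ α ∈ Set.Icc (0 : ℝ) 1, ∀ k l,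
        ‖C α k l - Matrix.diagonal lam k l‖ < ‖lam i - lam j‖) ∧
      ∃ γ : Fin n → ℝ → ℂ, IsEigenpathSet n C γ ∧
        (∀ k, γ k 0 = lam k) ∧
        γ i 1 = lam j ∧ γ j 1 = lam i ∧
        ∀ k, k ≠ i → k ≠ j → γ k 1 = lam k :=
  diagonal_swap_path_general n lam hinj i j hij
end
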